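/- arXiv:1410.0912 — 13 statements merged into one kernel-verified Lean document; each statement's English description precedes it below -/
import Mathlib

section
/- Let q be a prime power and let P(X) = \sum_{i=0}^{q-2} b_i X^i be a nonzero polynomial over F_q of degree at most q-2. Let m be the number of x in F_q^* with P(x) ≠ 0. Then there does not exist any k in {0, 1, ..., q-2} such that all m coefficients b_{k mod (q-1)}, b_{(k+1) mod (q-1)}, ..., b_{(k+m-1) mod (q-1)} are zero; equivalently, for every k in {0,...,q-2} at least one of the coefficients b_{(k+j) mod (q-1)}, j = 0,...,m-1, is nonzero. -/
/-!
Put `n = q - 1`. As `x ^ n = 1` on `F^*`, rotating the coefficients of `P` cyclically by `t`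
gives a polynomial `Q` with `x ^ t * Q(x) = P(x)` on `F^*`. Rotating the zero run
`b_k, …, b_{k+m-1}` into the top positions `n - m, …, n - 1` makes `deg Q < n - m`, while `Q`
vanishes at the `n - m` zeros of `P` in `F^*`. Hence `Q = 0`, so `P` vanishes on all of `F^*`,
which is impossible for a nonzero polynomial of degree `< n`.
-/

open Polynomial Finset

theorem Finset.sum_range_add_mod {M : Type*} [AddCommMonoid M] (f : ℕ → M) (n t : ℕ) :
    ∑ i ∈ range n, f ((i + t) % n) = ∑ i ∈ range n, f i := by
  rcases Nat.eq_zero_or_pos n with rfl | hn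
  · simp
  have : NeZero n := ⟨hn.ne'⟩
  simp only [← Fin.sum_univ_eq_sum_range]
  refine Fintype.sum_equiv (Equiv.addRight (Fin.ofNat n t)) _ _ fun i => ?_
  simp [Fin.val_add]

namespace Polynomial

variable {R : Type*}

noncomputable def cyclicShift [Semiring R] (n t : ℕ) (P : R[X]) : R[X] :=
  ∑ i ∈ range n, C (P.coeff ((i + t) % n)) * X ^ i

theorem coeff_cyclicShift [Semiring R] (n t : ℕ) (P : R[X]) (l : ℕ) :
    (cyclicShift n t P).coeff l = if l < n then P.coeff ((l + t) % n) else 0 := by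
  simp [cyclicShift, coeff_C_mul, coeff_X_pow]

theorem eval_cyclicShift [CommSemiring R] {n : ℕ} (t : ℕ) {P : R[X]} (hP : P.natDegree < n)
    {x : R} (hx : x ^ n = 1) : x ^ t * (cyclicShift n t P).eval x = P.eval x := by
  simp only [cyclicShift, eval_finsetSum, eval_mul, eval_C, eval_pow, eval_X, mul_sum,
    eval_eq_sum_range' hP]
  calc ∑ i ∈ range n, x ^ t * (P.coeff ((i + t) % n) * x ^ i)
      = ∑ i ∈ range n, P.coeff ((i + t) % n) * x ^ ((i + t) % n) := by
        refine sum_congr rfl fun i _ => ?_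
        rw [← pow_eq_pow_mod _ hx, pow_add]
        ring
    _ = ∑ i ∈ range n, P.coeff i * x ^ i := sum_range_add_mod (fun j => P.coeff j * x ^ j) n t

theorem degree_cyclicShift_lt [Semiring R] {n m k : ℕ} {P : R[X]} (hmn : m ≤ n)
    (hzero : ∀ j < m, P.coeff ((k + j) % n) = 0) :
    (cyclicShift n (k + m) P).degree < ↑(n - m) := by
  refine (degree_lt_iff_coeff_zero _ _).2 fun l hl => ?_
  rw [coeff_cyclicShift]
  split_ifs with hln
  · obtain ⟨j, hj, rfl⟩ : ∃ j < m, l = n - m + j := ⟨l - (n - m), by omega, by omega⟩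
    rw [show n - m + j + (k + m) = k + j + n by omega, Nat.add_mod_right]
    exact hzero j hj
  · rfl

end Polynomial

/-- **Theorem 1 (Kopparty–Wang, strengthened).** Let `P(X) = ∑ b_i X^i` be a nonzero
polynomial over `F_q` of degree at most `q-2` and let `m` be the number of
`x ∈ F_q^*` with `P(x) ≠ 0`. Then there is no `k ∈ {0,…,q-2}` such that the `m`
coefficients `b_{(k+j) mod (q-1)}`, `j = 0,…,m-1`, are all zero. -/
theorem no_long_zero_run_of_coeffs
    {F : Type*} [Field F] [Fintype F] {q : ℕ} (hq : Fintype.card F = q)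
    (P : Polynomial F) (hP : P ≠ 0) (hdeg : P.natDegree ≤ q - 2)
    (m : ℕ) (hm : m = Nat.card {x : F | x ≠ 0 ∧ Polynomial.eval x P ≠ 0}) :
    ¬ ∃ k ≤ q - 2, ∀ j < m, P.coeff ((k + j) % (q - 1)) = 0 := by
  classical
  rintro ⟨k, -, hzero⟩
  subst hq
  have hcard : 2 ≤ Fintype.card F := Fintype.one_lt_card
  set n := Fintype.card F - 1
  set U : Finset F := univ.erase 0
  set Z : Finset F := U.filter fun x => P.eval x = 0
  have hU : #U = n := by rw [card_erase_of_mem (mem_univ _), card_univ]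
  have hmZ : m + #Z = n := by
    rw [hm, ← hU, ← card_filter_add_card_filter_not (s := U) (p := fun x => P.eval x ≠ 0)]
    simp [U, Z, ← Set.ncard_coe_finset]
  have hPQ : ∀ x ∈ U, x ^ (k + m) * (cyclicShift n (k + m) P).eval x = P.eval x :=
    fun x hx => eval_cyclicShift _ (by omega)
      (FiniteField.pow_card_sub_one_eq_one x (ne_of_mem_erase hx))
  have hQ : cyclicShift n (k + m) P = 0 := by
    refine eq_zero_of_degree_lt_of_eval_finset_eq_zero Z ?_ fun x hx => ?_
    · rw [show #Z = n - m by omega]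
      exact degree_cyclicShift_lt (by omega) hzero
    · obtain ⟨hxU, hPx⟩ := mem_filter.1 hx
      simpa [hPx, ne_of_mem_erase hxU] using hPQ x hxU
  refine hP (eq_zero_of_degree_lt_of_eval_finset_eq_zero U ?_ fun x hx => ?_)
  · rw [hU]
    exact (natDegree_lt_iff_degree_lt hP).1 (by omega)
  · rw [← hPQ x hx, hQ, eval_zero, mul_zero]
end

section
/- Let q be a prime power, let m ≥ 2, and let S be a subset of F_q^* of size q-1-m. Write P(X) = \prod_{a ∈ S}(X - a) = \sum_{i=0}^{q-1-m} b_i X^i. Then there exists k in {1, ..., q-2m} such that b_k = b_{k+1} = ... = b_{k+m-2} = 0 if and only if F_q^* \ S is contained in a coset γH for some γ in F_q^* and some proper multiplicative subgroup H of F_q^*. -/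
/-!
Put `T = F^* \ S` and `Q = ∏_{t ∈ T} (X - t)`, so that `P Q = X^(q-1) - 1` and `deg Q = m`. Both
conditions are equivalent to: `t ↦ t^n` is constant on `T` for some `n` with `m ≤ n ≤ q - 1 - m`.

A zero run `b_k = ⋯ = b_(n-1) = 0`, `n = k + m - 1`, lets us write `P = A + X^n B` with
`deg A < k`. Then `A Q ≡ -1 mod X^n` and `deg (A Q) ≤ n`, so `A Q = c X^n - 1` and every root of `Q`
has `t^n = c⁻¹`. Conversely, if `Q A = X^n - c` then `P (X^n - c) = (X^(q-1) - 1) A` with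
`deg A = n - m`, and comparing the coefficients in `(n - m, n)` shows that those of `P` vanish.

On the group side, `T ⊆ γH` gives `n = |H|`, and `2|H| ≤ q - 1` because `H` is proper. Conversely
`T` lies in a coset of the kernel of `x ↦ x^n`, which is proper in the cyclic group `F^*` since
`0 < n < q - 1`.
-/

open Polynomial Finset Lagrange

namespace Polynomial

theorem eq_C_mul_X_pow_of_X_pow_dvd {R : Type*} [Semiring R] {f : R[X]} {n : ℕ}
    (hdvd : X ^ n ∣ f) (hdeg : f.natDegree ≤ n) : f = C (f.coeff n) * X ^ n := by
  ext d
  rw [coeff_C_mul_X_pow]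
  rcases lt_trichotomy d n with hd | rfl | hd
  · rw [if_neg hd.ne, X_pow_dvd_iff.mp hdvd d hd]
  · rw [if_pos rfl]
  · rw [if_neg hd.ne', coeff_eq_zero_of_natDegree_lt (hdeg.trans_lt hd)]

theorem X_pow_dvd_sub_modByMonic_of_coeff_eq_zero {R : Type*} [CommRing R] [Nontrivial R]
    {P : R[X]} {k n : ℕ} (hzero : ∀ i, k ≤ i → i < n → P.coeff i = 0) : X ^ n ∣ P - P %ₘ X ^ k := by
  have hsplit : X ^ k * (P /ₘ X ^ k) = P - P %ₘ X ^ k :=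
    eq_sub_of_add_eq' (modByMonic_add_div P (X ^ k))
  refine X_pow_dvd_iff.mpr fun d hd => ?_
  rcases lt_or_ge d k with hdk | hkd
  · rw [← hsplit, coeff_X_pow_mul', if_neg (not_le.mpr hdk)]
  · have hrem : (P %ₘ X ^ k).coeff d = 0 :=
      coeff_eq_zero_of_degree_lt <| (degree_modByMonic_lt P (monic_X_pow k)).trans_le <| by
        rw [degree_X_pow]; exact_mod_cast hkd
    rw [coeff_sub, hzero d hkd hd, hrem, sub_zero]

variable {F : Type*} [Field F] {P Q : F[X]} {N : ℕ}

theorem exists_pow_eq_of_coeff_eq_zero (hPQ : P * Q = X ^ N - 1) {k n : ℕ} (hk : 0 < k)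
    (hn : k + Q.natDegree ≤ n + 1) (hnN : n ≤ N)
    (hzero : ∀ i, k ≤ i → i < n → P.coeff i = 0) :
    ∃ c : F, ∀ t, Q.IsRoot t → t ^ n = c := by
  set A := P %ₘ X ^ k
  have hA : A.natDegree < k := by
    have hX : (X ^ k : F[X]) ≠ 1 := fun h => by simpa [hk.ne'] using congrArg natDegree h
    simpa using natDegree_modByMonic_lt P (monic_X_pow k) hX
  have hdvd : X ^ n ∣ A * Q + 1 := by
    have h : A * Q + 1 = X ^ N - (P - A) * Q := by linear_combination hPQ
    rw [h]
    exact dvd_sub (pow_dvd_pow X hnN)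
      (dvd_mul_of_dvd_left (X_pow_dvd_sub_modByMonic_of_coeff_eq_zero hzero) Q)
  have hdeg : (A * Q + 1).natDegree ≤ n :=
    natDegree_add_le_of_degree_le (natDegree_mul_le.trans (by omega)) (by simp)
  refine ⟨((A * Q + 1).coeff n)⁻¹, fun t ht => eq_inv_of_mul_eq_one_right ?_⟩
  have h := congrArg (eval t) (eq_C_mul_X_pow_of_X_pow_dvd hdvd hdeg)
  simp only [eval_add, eval_mul, ht.eq_zero, mul_zero, zero_add, eval_one, eval_C,
    eval_pow, eval_X] at h
  exact h.symm

theorem coeff_eq_zero_of_dvd_X_pow_sub_C (hPQ : P * Q = X ^ N - 1) {n i : ℕ} {c : F}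
    (hdvd : Q ∣ X ^ n - C c) (hc : c ≠ 0) (hnN : n ≤ N) (hi : n < i + Q.natDegree)
    (hin : i < n) : P.coeff i = 0 := by
  obtain ⟨A, hA⟩ := hdvd
  have hXc : X ^ n - C c ≠ 0 := X_pow_sub_C_ne_zero (by omega) c
  have hdeg : Q.natDegree + A.natDegree = n := by
    rw [← natDegree_mul (left_ne_zero_of_mul (hA ▸ hXc)) (right_ne_zero_of_mul (hA ▸ hXc)),
      ← hA, natDegree_X_pow_sub_C]
  have key : P * X ^ n - P * C c = X ^ N * A - A := by linear_combination P * hA + A * hPQ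
  have h := congrArg (coeff · i) key
  simp only [coeff_sub, coeff_mul_X_pow', coeff_mul_C, coeff_X_pow_mul', if_neg (not_le.mpr hin),
    if_neg (by omega : ¬N ≤ i), coeff_eq_zero_of_natDegree_lt (by omega : A.natDegree < i)] at h
  simpa [hc] using h

end Polynomial

theorem Lagrange.nodal_dvd {F ι : Type*} [Field F] {s : Finset ι} {v : ι → F}
    (hv : Function.Injective v) {p : F[X]} (hp : ∀ i ∈ s, p.IsRoot (v i)) : nodal s v ∣ p := by
  rw [nodal_eq]
  exact Finset.prod_dvd_of_coprime ((pairwise_coprime_X_sub_C hv).set_pairwise _)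
    fun i hi => dvd_iff_isRoot.mpr (hp i hi)

theorem Subgroup.two_mul_card_le_of_ne_top {G : Type*} [Group G] [Finite G] {H : Subgroup G}
    (hH : H ≠ ⊤) : 2 * Nat.card H ≤ Nat.card G := by
  rw [← H.card_mul_index, mul_comm]
  exact Nat.mul_le_mul_left _ (H.one_lt_index_of_ne_top hH)

theorem IsCyclic.ker_powMonoidHom_ne_top {G : Type*} [CommGroup G] [IsCyclic G] [Finite G]
    {n : ℕ} (hn : 0 < n) (hnG : n < Nat.card G) : (powMonoidHom n : G →* G).ker ≠ ⊤ := by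
  intro htop
  have h := IsCyclic.card_powMonoidHom_ker (G := G) n
  rw [htop, Subgroup.card_top] at h
  have := Nat.le_of_dvd hn (Nat.gcd_dvd_right (Nat.card G) n)
  omega

theorem card_le_card_of_forall_mem_coset {G : Type*} [Group G] {H : Subgroup G} [Finite H]
    {T : Finset G} {γ : G} (hT : ∀ x ∈ T, ∃ h ∈ H, x = γ * h) : #T ≤ Nat.card H := by
  rw [← Nat.card_eq_finsetCard]
  refine Nat.card_le_card_of_injective (fun x => ⟨γ⁻¹ * x, ?_⟩) fun x y hxy => ?_
  · obtain ⟨h, hh, hx⟩ := hT x x.2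
    simpa [hx] using hh
  · exact Subtype.ext (mul_left_cancel (congrArg Subtype.val hxy))

theorem exists_coset_ne_top_iff_exists_pow_eq {G : Type*} [CommGroup G] [IsCyclic G] [Finite G]
    {T : Finset G} (hT : T.Nonempty) :
    (∃ γ : G, ∃ H : Subgroup G, H ≠ ⊤ ∧ ∀ x ∈ T, ∃ h ∈ H, x = γ * h) ↔
      ∃ n, #T ≤ n ∧ n + #T ≤ Nat.card G ∧ ∀ t ∈ T, ∀ s ∈ T, t ^ n = s ^ n := by
  constructor
  · rintro ⟨γ, H, hH, hcov⟩
    have hTH := card_le_card_of_forall_mem_coset hcov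
    have hpow : ∀ x ∈ T, x ^ Nat.card H = γ ^ Nat.card H := fun x hx => by
      obtain ⟨h, hh, rfl⟩ := hcov x hx
      rw [mul_pow, orderOf_dvd_iff_pow_eq_one.mp (H.orderOf_dvd_natCard hh), mul_one]
    refine ⟨Nat.card H, hTH, ?_, fun t ht s hs => (hpow t ht).trans (hpow s hs).symm⟩
    linarith [Subgroup.two_mul_card_le_of_ne_top hH]
  · rintro ⟨n, hTn, hnG, hpow⟩
    obtain ⟨t₀, ht₀⟩ := hT
    have hT0 : 0 < #T := card_pos.mpr ⟨t₀, ht₀⟩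
    refine ⟨t₀, (powMonoidHom n).ker, IsCyclic.ker_powMonoidHom_ne_top (by omega) (by omega),
      fun x hx => ⟨t₀⁻¹ * x, ?_, (mul_inv_cancel_left t₀ x).symm⟩⟩
    rw [MonoidHom.mem_ker, powMonoidHom_apply, mul_pow, inv_pow, hpow x hx t₀ ht₀,
      inv_mul_cancel]

namespace FiniteField

variable {F : Type*} [Field F] [Fintype F] [DecidableEq F] {S : Finset F}

theorem map_units_val_filter_mem (hS0 : (0 : F) ∉ S) :
    (univ.filter fun x : Fˣ => (x : F) ∈ S).map ⟨Units.val, Units.val_injective⟩ = S := by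
  ext a
  simp only [mem_map, mem_filter, mem_univ, true_and, Function.Embedding.coeFn_mk]
  refine ⟨fun ⟨x, hx, hxa⟩ => hxa ▸ hx, fun ha => ⟨Units.mk0 a ?_, ha, rfl⟩⟩
  exact ne_of_mem_of_not_mem ha hS0

theorem card_units_filter_notMem_add_card (hS0 : (0 : F) ∉ S) :
    #(univ.filter fun x : Fˣ => (x : F) ∉ S) + #S = Fintype.card F - 1 := by
  have h := congrArg Finset.card (map_units_val_filter_mem hS0)
  rw [card_map] at h
  rw [← h, add_comm, card_filter_add_card_filter_not, card_univ, Fintype.card_units]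

theorem nodal_univ_units : nodal (univ : Finset Fˣ) Units.val = X ^ (Fintype.card F - 1) - 1 := by
  classical
  simpa [Fintype.card_units] using nodal_subgroup_eq_X_pow_card_sub_one (⊤ : Subgroup Fˣ)

theorem prod_X_sub_C_mul_nodal_units_filter_notMem (hS0 : (0 : F) ∉ S) :
    (∏ a ∈ S, (X - C a)) * nodal (univ.filter fun x : Fˣ => (x : F) ∉ S) Units.val =
      X ^ (Fintype.card F - 1) - 1 := by
  rw [← nodal_univ_units, nodal_eq, nodal_eq,
    ← prod_filter_mul_prod_filter_not univ fun x : Fˣ => (x : F) ∈ S]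
  congr 1
  conv_lhs => rw [← map_units_val_filter_mem hS0, prod_map]
  rfl

end FiniteField

/-- **Theorem 2 (Kopparty–Wang).** Let `S ⊆ F_q^*` with `|S| = q-1-m`, `m ≥ 2`, and let
`P(X) = ∏_{a ∈ S} (X - a) = ∑ b_i X^i`. There exists `k ∈ {1,…,q-2m}` with
`b_k = ⋯ = b_{k+m-2} = 0` if and only if `F_q^* \ S` is contained in a coset `γH` of a
proper multiplicative subgroup `H` of `F_q^*`. -/
theorem zero_run_iff_complement_in_coset
    {F : Type*} [Field F] [Fintype F] {q m : ℕ} (hq : Fintype.card F = q)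
    (hm : 2 ≤ m) (S : Finset F) (hS0 : (0 : F) ∉ S) (hcard : S.card = q - 1 - m)
    (P : Polynomial F) (hP : P = ∏ a ∈ S, (Polynomial.X - Polynomial.C a)) :
    (∃ k, 1 ≤ k ∧ k ≤ q - 2 * m ∧ ∀ j ≤ m - 2, P.coeff (k + j) = 0) ↔
      (∃ γ : Fˣ, ∃ H : Subgroup Fˣ, H ≠ ⊤ ∧
        ∀ x : Fˣ, (x : F) ∉ S → ∃ h ∈ H, x = γ * h) := by
  classical
  set T := univ.filter fun x : Fˣ => (x : F) ∉ S
  have hTS : #T + #S = q - 1 := by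
    rw [← hq]; exact FiniteField.card_units_filter_notMem_add_card hS0
  have hPQ : P * nodal T Units.val = X ^ (q - 1) - 1 := by
    rw [hP, ← hq]; exact FiniteField.prod_X_sub_C_mul_nodal_units_filter_notMem hS0
  have hq2 : 2 ≤ q := hq ▸ Fintype.one_lt_card
  have hT : T.Nonempty := card_pos.mp (by omega)
  trans ∃ n, #T ≤ n ∧ n + #T ≤ q - 1 ∧ ∀ t ∈ T, ∀ s ∈ T, t ^ n = s ^ n
  · constructor
    · rintro ⟨k, hk1, hkq, hrun⟩
      have hTm : #T = m := by omega
      obtain ⟨c, hc⟩ := exists_pow_eq_of_coeff_eq_zero hPQ (k := k) (n := k + m - 1) hk1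
        (by rw [natDegree_nodal]; omega) (by omega) fun i hki hin => by
          simpa [Nat.add_sub_cancel' hki] using hrun (i - k) (by omega)
      refine ⟨k + m - 1, by omega, by omega, fun t ht s hs => Units.ext ?_⟩
      rw [Units.val_pow_eq_pow_val, Units.val_pow_eq_pow_val, hc _ (eval_nodal_at_node ht),
        hc _ (eval_nodal_at_node hs)]
    · rintro ⟨n, hTn, hnq, hpow⟩
      have hTm : #T = m := by omega
      obtain ⟨t₀, ht₀⟩ := hT
      have hdvd : nodal T Units.val ∣ X ^ n - C ((t₀ ^ n : Fˣ) : F) :=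
        nodal_dvd Units.val_injective fun t ht => by
          simp [IsRoot, ← Units.val_pow_eq_pow_val, hpow t ht t₀ ht₀]
      refine ⟨n - m + 1, by omega, by omega, fun j hj => ?_⟩
      exact coeff_eq_zero_of_dvd_X_pow_sub_C hPQ hdvd (Units.ne_zero _) (by omega)
        (by rw [natDegree_nodal]; omega) (by omega)
  · rw [← hq, ← Fintype.card_units, ← Nat.card_eq_fintype_card,
      ← exists_coset_ne_top_iff_exists_pow_eq hT]
    simp [T]
end

section
/- Let q be a prime power, m ≥ 2, and let S ⊆ F_q^* have size q-1-m with T = F_q^* \ S contained in a coset γH of a proper multiplicative subgroup H of F_q^* of order d. Write P(X) = \prod_{a ∈ S}(X-a) = \sum_{i=0}^{q-1-m} b_i X^i. Then for each j = 0, 1, ..., (q-1)/d - 1 the coefficients b_{jd} and b_{jd+(d-m)} are nonzero, and every nonzero coefficient b_v of P satisfies jd ≤ v ≤ jd + (d-m) for some j in {0, 1, ..., (q-1)/d - 1}. -/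
open Polynomial

private lemma prod_X_sub_C_dvd_aux {F : Type*} [Field F] (s : Finset F) (p : F[X]) (hp : p ≠ 0)
    (hr : ∀ a ∈ s, p.IsRoot a) : (∏ a ∈ s, (X - C a)) ∣ p := by
  rw [Finset.prod_eq_multiset_prod, Multiset.prod_X_sub_C_dvd_iff_le_roots hp]
  exact (Multiset.le_iff_subset s.nodup).2 fun a ha => (Polynomial.mem_roots hp).2 (hr a ha)

/-- **Proposition 1 (shape of the support).** Let `S ⊆ F_q^*` with `|S| = q-1-m`, `m ≥ 2`,
such that `T = F_q^* \ S` is contained in a coset `γH` of a proper multiplicative subgroup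
`H ≤ F_q^*` of order `d`. Write `P(X) = ∏_{a ∈ S}(X-a) = ∑ b_i X^i`. Then for each
`j = 0,…,(q-1)/d - 1` the coefficients `b_{jd}` and `b_{jd+(d-m)}` are nonzero, and every
nonzero coefficient `b_v` satisfies `jd ≤ v ≤ jd+(d-m)` for some such `j`. -/
theorem support_shape_of_complement_in_coset
    {F : Type*} [Field F] [Fintype F] {q m d : ℕ} (hq : Fintype.card F = q)
    (hm : 2 ≤ m) (S : Finset F) (hS0 : (0 : F) ∉ S) (hcard : S.card = q - 1 - m)
    (γ : Fˣ) (H : Subgroup Fˣ) (hH : H ≠ ⊤) (hd : Nat.card H = d)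
    (hT : ∀ x : Fˣ, (x : F) ∉ S → ∃ h ∈ H, x = γ * h)
    (P : Polynomial F) (hP : P = ∏ a ∈ S, (Polynomial.X - Polynomial.C a)) :
    (∀ j < (q - 1) / d, P.coeff (j * d) ≠ 0 ∧ P.coeff (j * d + (d - m)) ≠ 0) ∧
      (∀ v, P.coeff v ≠ 0 → ∃ j < (q - 1) / d, j * d ≤ v ∧ v ≤ j * d + (d - m)) := by
  classical
  -- arithmetic preliminaries
  have hq1 : Fintype.card Fˣ = q - 1 := by rw [Fintype.card_units, hq]
  have hq2 : 2 ≤ q := by rw [← hq]; exact Fintype.one_lt_card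
  have hd0 : 0 < d := by rw [← hd]; exact Nat.card_pos
  have hddvd : d ∣ q - 1 := by
    rw [← hd, ← hq1, ← Nat.card_eq_fintype_card]
    exact Subgroup.card_subgroup_dvd_card H
  have hdlt : d < q - 1 := by
    refine lt_of_le_of_ne (Nat.le_of_dvd (by omega) hddvd) fun hcontra => hH ?_
    refine Subgroup.eq_top_of_card_eq H ?_
    rw [hd, hcontra, Nat.card_eq_fintype_card, hq1]
  set e := (q - 1) / d with he
  have hde : d * e = q - 1 := Nat.mul_div_cancel' hddvd
  -- the sets
  set N : Finset F := Finset.univ.erase 0 with hN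
  have hSN : S ⊆ N := fun a ha =>
    Finset.mem_erase.2 ⟨fun h => hS0 (h ▸ ha), Finset.mem_univ a⟩
  set t : Finset F := N \ S with ht
  have hNcard : N.card = q - 1 := by
    rw [hN, Finset.card_erase_of_mem (Finset.mem_univ 0), Finset.card_univ, hq]
  have htcard : t.card = (q - 1) - (q - 1 - m) := by
    rw [ht, Finset.card_sdiff_of_subset hSN, hNcard, hcard]
  -- the special constant
  set c₀ : F := ((γ : F)) ^ d with hc₀
  have hc₀ne : c₀ ≠ 0 := pow_ne_zero _ (Units.ne_zero γ)
  have hc₀e : c₀ ^ e = 1 := by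
    rw [hc₀, ← pow_mul, hde, ← hq]
    exact FiniteField.pow_card_sub_one_eq_one _ (Units.ne_zero γ)
  -- every element of t is a root of X^d - c₀
  have htpow : ∀ a ∈ t, a ^ d = c₀ := by
    intro a hat
    obtain ⟨haN, haS⟩ := Finset.mem_sdiff.1 hat
    have ha0 : a ≠ 0 := (Finset.mem_erase.1 haN).1
    obtain ⟨h, hh, hxe⟩ := hT (Units.mk0 a ha0) (by simpa using haS)
    have hhd : (h : F) ^ d = 1 := by
      have h2 : (⟨h, hh⟩ : H) ^ d = 1 := by rw [← hd]; exact pow_card_eq_one'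
      have h3 : (h : Fˣ) ^ d = 1 := by
        have := congrArg (fun x : H => (x : Fˣ)) h2
        simpa using this
      have := congrArg (fun x : Fˣ => (x : F)) h3
      simpa using this
    have ha : a = (γ : F) * (h : F) := by
      have := congrArg (fun x : Fˣ => (x : F)) hxe
      simpa using this
    rw [ha, mul_pow, hhd, mul_one, hc₀]
  -- polynomials
  set Q : F[X] := ∏ a ∈ t, (X - C a) with hQ
  have hQmonic : Q.Monic := monic_prod_of_monic _ _ fun a _ => monic_X_sub_C a
  have hQdeg : Q.natDegree = t.card := by
    rw [hQ, natDegree_prod_of_monic _ _ fun a _ => monic_X_sub_C a]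
    simp
  -- the big product identity
  have hbigmonic : (X ^ (q - 1) - 1 : F[X]).Monic := by
    have := monic_X_pow_sub_C (1 : F) (n := q - 1) (by omega)
    simpa using this
  have hbig : ∏ a ∈ N, (X - C a) = X ^ (q - 1) - 1 := by
    refine (Polynomial.eq_of_monic_of_dvd_of_natDegree_le
      (monic_prod_of_monic _ _ fun a _ => monic_X_sub_C a) hbigmonic ?_ ?_).symm
    · refine prod_X_sub_C_dvd_aux _ _ hbigmonic.ne_zero fun a ha => ?_
      have ha0 : a ≠ 0 := (Finset.mem_erase.1 ha).1
      have : a ^ (q - 1) = 1 := by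
        rw [← hq]; exact FiniteField.pow_card_sub_one_eq_one a ha0
      simp [Polynomial.IsRoot, this]
    · rw [natDegree_prod_of_monic _ _ fun a _ => monic_X_sub_C a]
      simp only [natDegree_X_sub_C, Finset.sum_const, smul_eq_mul, mul_one, hNcard]
      have : (X ^ (q - 1) - 1 : F[X]) = X ^ (q - 1) - C 1 := by simp
      rw [this, natDegree_X_pow_sub_C]
  have hQP : Q * P = X ^ (q - 1) - 1 := by
    rw [hQ, hP, ht, Finset.prod_sdiff hSN, hbig]
  -- Q divides X^d - C c₀
  have hXdmonic : (X ^ d - C c₀ : F[X]).Monic := monic_X_pow_sub_C _ (by omega)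
  obtain ⟨R, hR⟩ : Q ∣ (X ^ d - C c₀ : F[X]) := by
    refine prod_X_sub_C_dvd_aux _ _ hXdmonic.ne_zero fun a ha => ?_
    simp [Polynomial.IsRoot, htpow a ha]
  have hRne : R ≠ 0 := by
    intro h; rw [h, mul_zero] at hR; exact hXdmonic.ne_zero hR
  have hdegsum : t.card + R.natDegree = d := by
    have := Polynomial.natDegree_mul hQmonic.ne_zero hRne
    rw [← hR, natDegree_X_pow_sub_C, hQdeg] at this
    omega
  -- card t = m and m ≤ d
  have htm : t.card = m ∧ m ≤ d := by omega
  have hmd : m ≤ d := htm.2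
  have hRdeg : R.natDegree = d - m := by omega
  have hRmonic : R.Monic := by
    have := Polynomial.leadingCoeff_mul Q R
    rw [← hR, hXdmonic.leadingCoeff, hQmonic.leadingCoeff, one_mul] at this
    exact this.symm
  have hR0 : R.coeff 0 ≠ 0 := by
    rw [Polynomial.coeff_zero_eq_eval_zero]
    intro h
    have h2 := congrArg (Polynomial.eval 0) hR
    rw [Polynomial.eval_mul, h, mul_zero] at h2
    simp only [Polynomial.eval_sub, Polynomial.eval_pow, Polynomial.eval_X, Polynomial.eval_C,
      zero_pow (show d ≠ 0 by omega), zero_sub, neg_eq_zero] at h2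
    exact hc₀ne h2
  have hRtop : R.coeff (d - m) = 1 := by rw [← hRdeg]; exact hRmonic.coeff_natDegree
  -- the geometric factorization
  have hgeom : (∑ i ∈ Finset.range e, (X ^ d : F[X]) ^ i * (C c₀) ^ (e - 1 - i)) *
      (X ^ d - C c₀) = X ^ (q - 1) - 1 := by
    rw [geom_sum₂_mul, ← pow_mul, hde, ← C_pow, hc₀e, map_one]
  have hPG : P = (∑ i ∈ Finset.range e, (X ^ d : F[X]) ^ i * (C c₀) ^ (e - 1 - i)) * R := by
    apply mul_left_cancel₀ hQmonic.ne_zero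
    rw [hQP, ← hgeom, hR]; ring
  have hPsum : P = ∑ j ∈ Finset.range e, (C (c₀ ^ (e - 1 - j)) * R) * X ^ (d * j) := by
    rw [hPG, Finset.sum_mul]
    refine Finset.sum_congr rfl fun j _ => ?_
    rw [← C_pow, ← pow_mul]; ring
  have hcoeff : ∀ v, P.coeff v =
      ∑ j ∈ Finset.range e, if d * j ≤ v then c₀ ^ (e - 1 - j) * R.coeff (v - d * j) else 0 := by
    intro v
    rw [hPsum, Polynomial.finset_sum_coeff]
    refine Finset.sum_congr rfl fun j _ => ?_
    rw [Polynomial.coeff_mul_X_pow']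
    split
    · rw [Polynomial.coeff_C_mul]
    · rfl
  -- nonzero coefficients only appear where expected
  have hsingle : ∀ v, P.coeff v =
      if v / d < e then c₀ ^ (e - 1 - v / d) * R.coeff (v % d) else 0 := by
    intro v
    have hdm : d * (v / d) + v % d = v := Nat.div_add_mod v d
    have hr : v % d < d := Nat.mod_lt v hd0
    have hzero : ∀ j, v / d < j → ¬ (d * j ≤ v) := by
      intro j hj hle
      have h1 : d * (v / d + 1) ≤ d * j := Nat.mul_le_mul_left d hj
      rw [Nat.mul_add, mul_one] at h1
      linarith
    have hle3 : ∀ j, j < v / d → d * j + d ≤ v := by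
      intro j hj
      have h1 : d * (j + 1) ≤ d * (v / d) := Nat.mul_le_mul_left d hj
      rw [Nat.mul_add, mul_one] at h1
      linarith [Nat.mul_div_le v d]
    have hzero2 : ∀ j, j < v / d → R.coeff (v - d * j) = 0 := by
      intro j hj
      apply Polynomial.coeff_eq_zero_of_natDegree_lt
      rw [hRdeg]
      have h4 : d ≤ v - d * j := Nat.le_sub_of_add_le (by linarith [hle3 j hj])
      exact lt_of_lt_of_le (Nat.sub_lt (by omega) (by omega)) h4
    rw [hcoeff v]
    by_cases hv : v / d < e
    · rw [if_pos hv]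
      rw [Finset.sum_eq_single (v / d)]
      · have hsub : v - d * (v / d) = v % d :=
          Nat.sub_eq_of_eq_add (by rw [add_comm]; exact hdm.symm)
        rw [if_pos (Nat.mul_div_le v d), hsub]
      · intro j hj hne
        rcases lt_or_gt_of_ne hne with h1 | h1
        · rw [if_pos (by linarith [hle3 j h1]), hzero2 j h1, mul_zero]
        · rw [if_neg (hzero j h1)]
      · intro habs; exact absurd (Finset.mem_range.2 hv) habs
    · rw [if_neg hv]
      refine Finset.sum_eq_zero fun j hj => ?_
      rw [Finset.mem_range] at hj
      have hjk : j < v / d := lt_of_lt_of_le hj (le_of_not_gt hv)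
      rw [if_pos (by linarith [hle3 j hjk]), hzero2 j hjk, mul_zero]
  constructor
  · intro j hj
    constructor
    · have h1 : (j * d) / d = j := Nat.mul_div_cancel j hd0
      have h2 : (j * d) % d = 0 := Nat.mul_mod_left j d
      rw [hsingle, h1, h2, if_pos hj]
      exact mul_ne_zero (pow_ne_zero _ hc₀ne) hR0
    · have hrlt : d - m < d := by omega
      have h1 : (j * d + (d - m)) / d = j := by
        rw [add_comm, Nat.add_mul_div_right _ _ hd0, Nat.div_eq_of_lt hrlt, zero_add]
      have h2 : (j * d + (d - m)) % d = d - m := by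
        rw [add_comm, Nat.add_mul_mod_self_right, Nat.mod_eq_of_lt hrlt]
      rw [hsingle, h1, h2, if_pos hj, hRtop, mul_one]
      exact pow_ne_zero _ hc₀ne
  · intro v hv
    rw [hsingle] at hv
    by_cases hve : v / d < e
    · rw [if_pos hve] at hv
      have hRc : R.coeff (v % d) ≠ 0 := fun h => hv (by rw [h, mul_zero])
      have hmod : v % d ≤ d - m := by
        by_contra h
        exact hRc (Polynomial.coeff_eq_zero_of_natDegree_lt (by rw [hRdeg]; omega))
      refine ⟨v / d, hve, ?_, ?_⟩
      · exact Nat.div_mul_le_self v d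
      · calc v = v / d * d + v % d := (Nat.div_add_mod' v d).symm
          _ ≤ v / d * d + (d - m) := Nat.add_le_add_left hmod _
    · rw [if_neg hve] at hv; exact absurd rfl hv
end

section
/- Let q be a prime power, m ≥ 2, and let S ⊆ F_q^* have size q-1-m such that T = F_q^* \ S is contained in a coset γH of a proper multiplicative subgroup H of F_q^* of order d. Then P(X) = \prod_{a ∈ S}(X-a) factors as P(X) = (\sum_{j=1}^{(q-1)/d} c_j X^{(q-1)-jd}) · U(X), where the c_j are elements of F_q and U(X) is a product of d-m pairwise different linear factors X - x with x in F_q^*. -/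
/-!
The nonzero elements of `F_q` are the roots of `X^(q-1) - 1` and the coset `γH` is the root set
of `X^d - γ^d`, so `X^(q-1) - 1 = P · ∏_{x ∈ T} (X - x)` and `X^d - γ^d = U · ∏_{x ∈ T} (X - x)`
with `U = ∏_{x ∈ γH \ T} (X - x)`. Since `γ^(q-1) = 1`, the geometric series gives
`X^(q-1) - 1 = (∑_{j=1}^{(q-1)/d} γ^(d(j-1)) X^(q-1-jd)) · (X^d - γ^d)`, and cancelling
`∏_{x ∈ T} (X - x)` yields the factorization of `P`.
-/

open Polynomial Finset

theorem Polynomial.eq_prod_X_sub_C_of_monic_of_natDegree_eq {R : Type*} [CommRing R] [IsDomain R]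
    {p : R[X]} {s : Finset R} (hp : p.Monic) (hdeg : p.natDegree = #s)
    (hroot : ∀ x ∈ s, p.IsRoot x) : p = ∏ x ∈ s, (X - C x) := by
  have hle : s.val ≤ p.roots :=
    (Multiset.le_iff_subset s.nodup).2 fun x hx => (mem_roots hp.ne_zero).2 (hroot x hx)
  have hroots : p.roots = s.val :=
    (Multiset.eq_of_le_of_card_le hle ((card_roots' p).trans_eq hdeg)).symm
  conv_lhs => rw [← prod_multiset_X_sub_C_of_monic_of_roots_card_eq hp (by rw [hroots, hdeg]; rfl)]
  rw [hroots]
  rfl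

theorem sum_Icc_pow_mul_pow_mul_sub {R : Type*} [CommRing R] (x y : R) (n : ℕ) :
    (∑ j ∈ Icc 1 n, y ^ (j - 1) * x ^ (n - j)) * (x - y) = x ^ n - y ^ n := by
  have hshift : ∑ j ∈ Icc 1 n, y ^ (j - 1) * x ^ (n - j) =
      ∑ i ∈ range n, y ^ i * x ^ (n - 1 - i) := by
    rw [range_eq_Ico, ← Finset.Ico_add_one_right_eq_Icc, ← sum_Ico_add' _ 0 n 1]
    refine sum_congr rfl fun i _ => ?_
    congr 2
    omega
  rw [hshift, ← geom_sum₂_comm, geom_sum₂_mul]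

theorem Polynomial.X_pow_sub_one_eq_sum_mul {R : Type*} [CommRing R] (g : R) {d n : ℕ}
    (hd : d ∣ n) (hg : g ^ (n / d) = 1) :
    X ^ n - 1 = (∑ j ∈ Icc 1 (n / d), C (g ^ (j - 1)) * X ^ (n - j * d)) * (X ^ d - C g) := by
  obtain ⟨e, rfl⟩ := hd
  rcases Nat.eq_zero_or_pos d with rfl | hd0
  · simp
  rw [Nat.mul_div_cancel_left e hd0] at hg ⊢
  have hgeom := sum_Icc_pow_mul_pow_mul_sub (X ^ d) (C g) e
  rw [← pow_mul, ← map_pow, hg, map_one] at hgeom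
  rw [← hgeom]
  congr 1
  refine sum_congr rfl fun j _ => ?_
  rw [map_pow, ← pow_mul, Nat.mul_sub, mul_comm j d]

theorem FiniteField.prod_X_sub_C_erase_zero (K : Type*) [Field K] [Fintype K] [DecidableEq K] :
    ∏ x ∈ univ.erase (0 : K), (X - C x) = X ^ (Fintype.card K - 1) - 1 := by
  have hq : 1 < Fintype.card K := Fintype.one_lt_card
  rw [← C_1]
  refine (eq_prod_X_sub_C_of_monic_of_natDegree_eq (monic_X_pow_sub_C _ (by omega)) ?_ ?_).symm
  · rw [natDegree_X_pow_sub_C, card_erase_of_mem (mem_univ (0 : K)), card_univ]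
  · intro x hx
    simp [FiniteField.pow_card_sub_one_eq_one x (ne_of_mem_erase hx)]

section Coset

variable {K : Type*} [Field K] (γ : Kˣ) (H : Subgroup Kˣ) [Fintype H]

def cosetFinset : Finset K :=
  univ.map ⟨fun h : H => ((γ * h : Kˣ) : K),
    fun _ _ hab => Subtype.ext (mul_left_cancel (Units.ext hab))⟩

theorem card_cosetFinset : #(cosetFinset γ H) = Fintype.card H := card_map _

theorem zero_notMem_cosetFinset : (0 : K) ∉ cosetFinset γ H := by
  simp [cosetFinset]

theorem coe_mul_mem_cosetFinset {h : Kˣ} (hh : h ∈ H) : ((γ * h : Kˣ) : K) ∈ cosetFinset γ H :=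
  mem_map_of_mem _ (mem_univ (⟨h, hh⟩ : H))

theorem prod_X_sub_C_cosetFinset :
    ∏ x ∈ cosetFinset γ H, (X - C x) = X ^ Fintype.card H - C ((γ : K) ^ Fintype.card H) := by
  refine (eq_prod_X_sub_C_of_monic_of_natDegree_eq
    (monic_X_pow_sub_C _ Fintype.card_ne_zero) ?_ ?_).symm
  · rw [natDegree_X_pow_sub_C, card_cosetFinset]
  · simp only [cosetFinset, mem_map, mem_univ, true_and]
    rintro _ ⟨h, rfl⟩
    have hpow : (h : Kˣ) ^ Fintype.card H = 1 := by
      rw [← Subgroup.coe_pow, pow_card_eq_one, Subgroup.coe_one]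
    simp [mul_pow, ← Units.val_pow_eq_pow_val, hpow]

end Coset

theorem factorization_of_complement_in_coset_general
    {F : Type*} [Field F] [Fintype F] {q m d : ℕ} (hq : Fintype.card F = q)
    (S : Finset F) (hS0 : (0 : F) ∉ S) (hcard : S.card = q - 1 - m)
    (γ : Fˣ) (H : Subgroup Fˣ) (hd : Nat.card H = d)
    (hT : ∀ x : Fˣ, (x : F) ∉ S → ∃ h ∈ H, x = γ * h)
    (P : Polynomial F) (hP : P = ∏ a ∈ S, (Polynomial.X - Polynomial.C a)) :
    ∃ (c : ℕ → F) (B : Finset F), (0 : F) ∉ B ∧ B.card = d - m ∧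
      P = (∑ j ∈ Finset.Icc 1 ((q - 1) / d), Polynomial.C (c j) * Polynomial.X ^ (q - 1 - j * d)) *
        ∏ x ∈ B, (Polynomial.X - Polynomial.C x) := by
  classical
  subst hq hP
  rw [Nat.card_eq_fintype_card] at hd
  subst hd
  have hSA : S ⊆ univ.erase 0 := fun x hx => mem_erase.2 ⟨fun h => hS0 (h ▸ hx), mem_univ x⟩
  set T := univ.erase 0 \ S
  have hTC : T ⊆ cosetFinset γ H := by
    intro x hx
    obtain ⟨hx0, hxS⟩ := mem_sdiff.1 hx
    obtain ⟨h, hh, hxh⟩ := hT (Units.mk0 x (ne_of_mem_erase hx0)) hxS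
    simpa [← hxh] using coe_mul_mem_cosetFinset γ H hh
  have hdvd : Fintype.card H ∣ Fintype.card F - 1 := by
    simpa [Nat.card_eq_fintype_card, Fintype.card_units] using H.card_subgroup_dvd_card
  have hq : 0 < Fintype.card F - 1 := by have := Fintype.one_lt_card (α := F); omega
  refine ⟨fun j => ((γ : F) ^ Fintype.card H) ^ (j - 1), cosetFinset γ H \ T,
    fun h => zero_notMem_cosetFinset γ H (mem_sdiff.1 h).1, ?_, ?_⟩
  · have hTcard : #T = Fintype.card F - 1 - #S := by
      rw [card_sdiff_of_subset hSA, card_erase_of_mem (mem_univ _), card_univ]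
    have hTle : #T ≤ Fintype.card H := (card_le_card hTC).trans_eq (card_cosetFinset γ H)
    have hHle : Fintype.card H ≤ Fintype.card F - 1 := Nat.le_of_dvd hq hdvd
    rw [card_sdiff_of_subset hTC, card_cosetFinset]
    omega
  · have hg : ((γ : F) ^ Fintype.card H) ^ ((Fintype.card F - 1) / Fintype.card H) = 1 := by
      rw [← pow_mul, Nat.mul_div_cancel' hdvd]
      exact FiniteField.pow_card_sub_one_eq_one _ γ.ne_zero
    refine mul_right_cancel₀ (monic_prod_of_monic T _ fun x _ => monic_X_sub_C x).ne_zero ?_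
    rw [mul_comm, prod_sdiff hSA, FiniteField.prod_X_sub_C_erase_zero,
      X_pow_sub_one_eq_sum_mul _ hdvd hg, ← prod_X_sub_C_cosetFinset, ← prod_sdiff hTC, mul_assoc]

/-- **Factorization (from the proof of Proposition 1).** Let `S ⊆ F_q^*` with
`|S| = q-1-m`, `m ≥ 2`, such that `T = F_q^* \ S` is contained in a coset `γH` of a proper
multiplicative subgroup `H ≤ F_q^*` of order `d`. Then
`P(X) = ∏_{a ∈ S}(X-a) = (∑_{j=1}^{(q-1)/d} c_j X^{(q-1)-jd}) · U(X)` where the `c_j ∈ F_q`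
and `U(X)` is a product of `d-m` pairwise different linear factors `X - x` with `x ∈ F_q^*`. -/
theorem factorization_of_complement_in_coset
    {F : Type*} [Field F] [Fintype F] {q m d : ℕ} (hq : Fintype.card F = q)
    (hm : 2 ≤ m) (S : Finset F) (hS0 : (0 : F) ∉ S) (hcard : S.card = q - 1 - m)
    (γ : Fˣ) (H : Subgroup Fˣ) (hH : H ≠ ⊤) (hd : Nat.card H = d)
    (hT : ∀ x : Fˣ, (x : F) ∉ S → ∃ h ∈ H, x = γ * h)
    (P : Polynomial F) (hP : P = ∏ a ∈ S, (Polynomial.X - Polynomial.C a)) :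
    ∃ (c : ℕ → F) (B : Finset F), (0 : F) ∉ B ∧ B.card = d - m ∧
      P = (∑ j ∈ Finset.Icc 1 ((q - 1) / d), Polynomial.C (c j) * Polynomial.X ^ (q - 1 - j * d)) *
        ∏ x ∈ B, (Polynomial.X - Polynomial.C x) :=
  factorization_of_complement_in_coset_general hq S hS0 hcard γ H hd hT P hP
end

section
/- Let q be a prime power, m ≥ 2, and let S ⊆ F_q^* have size q-1-m such that T = F_q^* \ S is contained in a coset γH of a proper multiplicative subgroup H of F_q^* of order d. Write P(X) = \prod_{a ∈ S}(X-a) = \sum_{i=0}^{q-1-m} b_i X^i. Then the coefficient sequence of P contains (q-1)/d pairwise disjoint runs of m-1 consecutive zero coefficients: for each j = 0, 1, ..., (q-1)/d - 1, all of b_{jd+(d-m)+1}, b_{jd+(d-m)+2}, ..., b_{jd+d-1} are zero. -/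
open Polynomial

/-- **Disjoint zero runs.** Let `S ⊆ F_q^*` with `|S| = q-1-m`, `m ≥ 2`, such that
`T = F_q^* \ S` is contained in a coset `γH` of a proper multiplicative subgroup
`H ≤ F_q^*` of order `d`. Write `P(X) = ∏_{a ∈ S}(X-a) = ∑ b_i X^i`. Then the coefficient
sequence of `P` contains `(q-1)/d` pairwise disjoint runs of `m-1` consecutive zero
coefficients: for each `j = 0,…,(q-1)/d - 1`, all of
`b_{jd+(d-m)+1}, …, b_{jd+d-1}` are zero. -/
theorem disjoint_zero_runs_of_complement_in_coset
    {F : Type*} [Field F] [Fintype F] {q m d : ℕ} (hq : Fintype.card F = q)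
    (hm : 2 ≤ m) (S : Finset F) (hS0 : (0 : F) ∉ S) (hcard : S.card = q - 1 - m)
    (γ : Fˣ) (H : Subgroup Fˣ) (hH : H ≠ ⊤) (hd : Nat.card H = d)
    (hT : ∀ x : Fˣ, (x : F) ∉ S → ∃ h ∈ H, x = γ * h)
    (P : Polynomial F) (hP : P = ∏ a ∈ S, (Polynomial.X - Polynomial.C a)) :
    ∀ j < (q - 1) / d, ∀ v, j * d + (d - m) + 1 ≤ v → v ≤ j * d + d - 1 →
      P.coeff v = 0 := by
  classical
  have hq2 : 2 ≤ q := hq ▸ Fintype.one_lt_card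
  have hcardU : Nat.card Fˣ = q - 1 := by
    rw [Nat.card_units, Nat.card_eq_fintype_card, hq]
  have hd1 : 1 ≤ d := hd ▸ Nat.card_pos
  have hdvd : d ∣ q - 1 := by
    rw [← hd, ← hcardU]; exact Subgroup.card_subgroup_dvd_card H
  have hdlt : d < q - 1 := by
    rcases lt_or_eq_of_le (Nat.le_of_dvd (by omega) hdvd) with h | h
    · exact h
    · exact absurd (Subgroup.eq_top_of_card_eq H (by rw [hd, hcardU, h])) hH
  set n := (q - 1) / d with hn
  have hdn : d * n = q - 1 := Nat.mul_div_cancel' hdvd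
  set c : F := (γ : F) ^ d with hc
  -- the complement T inside F
  set T : Finset F := Finset.univ.filter (fun x => x ≠ 0 ∧ x ∉ S) with hTdef
  have hroot : ∀ t ∈ T, t ^ d = c := by
    intro t ht
    simp only [hTdef, Finset.mem_filter] at ht
    obtain ⟨-, ht0, htS⟩ := ht
    obtain ⟨h, hh, hx⟩ := hT (Units.mk0 t ht0) (by simpa using htS)
    have h1 : (⟨h, hh⟩ : H) ^ d = 1 := by rw [← hd]; exact pow_card_eq_one'
    have h2 : h ^ d = 1 := by exact_mod_cast congrArg (Subgroup.subtype H) h1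
    have h3 : (Units.mk0 t ht0) ^ d = γ ^ d := by rw [hx, mul_pow, h2, mul_one]
    have h4 : ((Units.mk0 t ht0 : Fˣ) : F) ^ d = ((γ : F)) ^ d := by
      exact_mod_cast congrArg Units.val h3
    simpa using h4
  set Q : Polynomial F := ∏ t ∈ T, (X - C t) with hQdef
  have hQmonic : Q.Monic := monic_prod_of_monic _ _ fun t _ => monic_X_sub_C t
  have hQne : Q ≠ 0 := hQmonic.ne_zero
  have hQdeg : Q.natDegree = T.card := by
    rw [hQdef, natDegree_prod _ _ fun t _ => X_sub_C_ne_zero t]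
    simp [natDegree_X_sub_C]
  have hp0 : (X ^ d - C c : Polynomial F) ≠ 0 := X_pow_sub_C_ne_zero (by omega) c
  have hle : T.val ≤ (X ^ d - C c : Polynomial F).roots := by
    rw [Multiset.le_iff_subset T.nodup]
    intro a ha
    rw [mem_roots hp0]
    have ha' : a ∈ T := ha
    simp [IsRoot, hroot a ha']
  have hQdvd : Q ∣ X ^ d - C c := by
    rw [hQdef, Finset.prod_eq_multiset_prod]
    exact (Multiset.prod_X_sub_C_dvd_iff_le_roots hp0 T.val).2 hle
  have hTled : T.card ≤ d := by
    have h1 := Multiset.card_le_card hle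
    have h2 := card_roots' (X ^ d - C c : Polynomial F)
    rw [natDegree_X_pow_sub_C] at h2
    simpa using le_trans h1 h2
  -- cards
  set N : Finset F := Finset.univ.filter (fun x => x ≠ 0) with hNdef
  have hNcard : N.card = q - 1 := by
    rw [hNdef, Finset.filter_ne', Finset.card_erase_of_mem (Finset.mem_univ 0),
      Finset.card_univ, hq]
  have hdisj : Disjoint S T := by
    rw [Finset.disjoint_left]
    intro a haS haT
    simp only [hTdef, Finset.mem_filter] at haT
    exact haT.2.2 haS
  have hunion : S ∪ T = N := by
    ext a
    simp only [hTdef, hNdef, Finset.mem_union, Finset.mem_filter, Finset.mem_univ,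
      true_and]
    constructor
    · rintro (h | h)
      · rintro rfl; exact hS0 h
      · exact h.1
    · intro h
      by_cases hs : a ∈ S
      · exact Or.inl hs
      · exact Or.inr ⟨h, hs⟩
  have hcards : S.card + T.card = q - 1 := by
    rw [← Finset.card_union_of_disjoint hdisj, hunion, hNcard]
  have hTm : T.card = m := by omega
  have hmd : m ≤ d := hTm ▸ hTled
  -- product over all nonzero elements
  have hNprod : ∏ a ∈ N, (X - C a) = X ^ (q - 1) - C 1 := by
    have hp1 : (X ^ (q - 1) - C 1 : Polynomial F) ≠ 0 :=
      X_pow_sub_C_ne_zero (by omega) 1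
    have hle' : N.val ≤ (X ^ (q - 1) - C 1 : Polynomial F).roots := by
      rw [Multiset.le_iff_subset N.nodup]
      intro a ha
      rw [mem_roots hp1]
      have ha' : a ≠ 0 := by
        have : a ∈ N := ha
        simpa [hNdef] using this
      have : a ^ (q - 1) = 1 := by
        rw [← hq]; exact FiniteField.pow_card_sub_one_eq_one a ha'
      simp [IsRoot, this]
    have hdvd' : ∏ a ∈ N, (X - C a) ∣ X ^ (q - 1) - C 1 := by
      rw [Finset.prod_eq_multiset_prod]
      exact (Multiset.prod_X_sub_C_dvd_iff_le_roots hp1 N.val).2 hle'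
    have hmon : (∏ a ∈ N, (X - C a)).Monic :=
      monic_prod_of_monic _ _ fun t _ => monic_X_sub_C t
    have hmon' : (X ^ (q - 1) - C 1 : Polynomial F).Monic :=
      monic_X_pow_sub_C 1 (by omega)
    apply eq_of_dvd_of_natDegree_le_of_leadingCoeff hdvd'
    · rw [natDegree_X_pow_sub_C,
        natDegree_prod _ _ fun t _ => X_sub_C_ne_zero t]
      simp [natDegree_X_sub_C, hNcard]
    · rw [hmon.leadingCoeff, hmon'.leadingCoeff]
  have hPQ : P * Q = X ^ (q - 1) - C 1 := by
    rw [hP, hQdef, ← Finset.prod_union hdisj, hunion, hNprod]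
  -- complementary factor
  obtain ⟨R, hR⟩ := hQdvd
  have hR0 : R ≠ 0 := by
    rintro rfl
    rw [mul_zero] at hR
    exact hp0 hR
  have hRdeg : m + R.natDegree = d := by
    have := congrArg natDegree hR
    rw [natDegree_X_pow_sub_C, natDegree_mul hQne hR0, hQdeg, hTm] at this
    omega
  -- geometric sum factorization
  set G : Polynomial F := ∑ i ∈ Finset.range n, (X ^ d) ^ i * (C c) ^ (n - 1 - i)
    with hGdef
  have hcn : c ^ n = 1 := by
    rw [hc, ← pow_mul, hdn, ← hq]
    exact FiniteField.pow_card_sub_one_eq_one (γ : F) (Units.ne_zero γ)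
  have hG : G * (X ^ d - C c) = X ^ (q - 1) - C 1 := by
    rw [hGdef, geom_sum₂_mul, ← pow_mul, hdn, ← C_pow, hcn]
  have hPeq : P = G * R := by
    apply mul_right_cancel₀ hQne
    rw [hPQ, ← hG, hR]
    ring
  -- final coefficient computation
  intro j hj v hv1 hv2
  rw [hPeq, hGdef, Finset.sum_mul, finset_sum_coeff]
  apply Finset.sum_eq_zero
  intro i _
  have hre : (X ^ d) ^ i * (C c) ^ (n - 1 - i) * R
      = C (c ^ (n - 1 - i)) * R * X ^ (d * i) := by
    rw [← pow_mul, ← C_pow]; ring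
  rw [hre, coeff_mul_X_pow']
  split_ifs with hvi
  · rw [coeff_C_mul]
    have hz : R.coeff (v - d * i) = 0 := by
      apply coeff_eq_zero_of_natDegree_lt
      have hij : i ≤ j := by
        by_contra hgt
        push_neg at hgt
        have h2 : j * d + d ≤ d * i := by
          calc j * d + d = d * (j + 1) := by ring
            _ ≤ d * i := Nat.mul_le_mul le_rfl hgt
        omega
      have h3 : d * i ≤ d * j := Nat.mul_le_mul le_rfl hij
      have h4 : d * j = j * d := Nat.mul_comm d j
      omega
    rw [hz, mul_zero]
  · rfl
end

section
/- Let F be a field, n a positive integer, ≺ a monomial ordering on monomials in F[X_1, ..., X_n], and I ⊆ F[X_1, ..., X_n] an ideal whose footprint Δ_≺(I) is a finite set. If P_1, ..., P_ℓ are ℓ pairwise different points of F^n that are common zeros of all polynomials in I, then ℓ ≤ |Δ_≺(I)|. -/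
/-!
Every polynomial is congruent modulo `I` to an `F`-linear combination of footprint monomials:
its leading term can be cancelled either by an element of `I` (if the leading monomial lies
outside the footprint) or by the monomial itself (if it lies inside), and the degree drops.
Evaluation at the common zeros vanishes on `I` and, by interpolation, maps onto `F^ℓ`; so it
already maps the span of the footprint monomials, of dimension `|Δ_≺(I)|`, onto `F^ℓ`.
-/
open scoped MonomialOrder

/-- `e` is the leading monomial (exponent vector) of the nonzero polynomial `f`
with respect to the monomial order `mo`. -/
def IsLeadingMonomialOf {σ : Type*} (mo : MonomialOrder σ) {R : Type*} [CommSemiring R]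
    (f : MvPolynomial σ R) (e : σ →₀ ℕ) : Prop :=
  e ∈ f.support ∧ ∀ e' ∈ f.support, e' ≼[mo] e

/-- The footprint `Δ_≺(I)` of an ideal `I`: the set of exponent vectors which are not the
leading monomial of any nonzero polynomial in `I`. -/
def footprint {σ : Type*} (mo : MonomialOrder σ) {R : Type*} [CommSemiring R]
    (I : Ideal (MvPolynomial σ R)) : Set (σ →₀ ℕ) :=
  {e | ¬ ∃ f ∈ I, f ≠ 0 ∧ IsLeadingMonomialOf mo f e}

open MvPolynomial

namespace MonomialOrder

variable {σ : Type*} (mo : MonomialOrder σ)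

lemma sPolynomial_of_degree_eq {R : Type*} [CommRing R] {f g : MvPolynomial σ R}
    (h : mo.degree f = mo.degree g) :
    mo.sPolynomial f g = mo.leadingCoeff g • f - mo.leadingCoeff f • g := by
  simp [sPolynomial, h, smul_eq_C_mul]

theorem submodule_eq_top_of_forall_exists_degree_eq {F : Type*} [Field F]
    {M : Submodule F (MvPolynomial σ F)} (hM : ∀ e, ∃ g ∈ M, g ≠ 0 ∧ mo.degree g = e) :
    M = ⊤ := by
  refine Submodule.eq_top_iff'.2 fun f => ?_
  induction hd : mo.toSyn (mo.degree f) using WellFoundedLT.induction generalizing f with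
  | _ d ih =>
  rcases eq_or_ne f 0 with rfl | hf
  · exact M.zero_mem
  obtain ⟨g, hgM, hg, hgf⟩ := hM (mo.degree f)
  have hs : mo.sPolynomial f g ∈ M := by
    rcases eq_or_ne (mo.sPolynomial f g) 0 with hs | hs
    · exact hs ▸ M.zero_mem
    exact ih _ (hd ▸ mo.sPolynomial_lt_of_degree_ne_zero_of_degree_eq hgf.symm hs) _ rfl
  rw [mo.sPolynomial_of_degree_eq hgf.symm, M.sub_mem_iff_left (M.smul_mem _ hgM)] at hs
  exact (M.smul_mem_iff (mo.leadingCoeff_ne_zero_iff.2 hg)).1 hs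

end MonomialOrder

lemma IsLeadingMonomialOf.degree_eq {σ R : Type*} [CommSemiring R] {mo : MonomialOrder σ}
    {f : MvPolynomial σ R} {e : σ →₀ ℕ} (h : IsLeadingMonomialOf mo f e) :
    mo.degree f = e := by
  have hf : f ≠ 0 := by rintro rfl; simp [IsLeadingMonomialOf] at h
  exact mo.toSyn.injective <| le_antisymm (h.2 _ (mo.degree_mem_support hf)) (mo.le_degree h.1)

theorem sup_restrictSupport_footprint_eq_top {σ F : Type*} [Field F] (mo : MonomialOrder σ)
    (I : Ideal (MvPolynomial σ F)) :
    I.restrictScalars F ⊔ restrictSupport F (footprint mo I) = ⊤ := by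
  classical
  refine mo.submodule_eq_top_of_forall_exists_degree_eq fun e => ?_
  by_cases he : e ∈ footprint mo I
  · refine ⟨monomial e 1, Submodule.mem_sup_right ?_, by simp, by simp [mo.degree_monomial]⟩
    exact (monomial_mem_restrictSupport F).2 (.inl he)
  · obtain ⟨g, hgI, hg, hge⟩ := not_not.1 he
    exact ⟨g, Submodule.mem_sup_left hgI, hg, hge.degree_eq⟩

namespace MvPolynomial

lemma injective_ker_eval {σ R : Type*} [CommRing R] :
    Function.Injective fun x : σ → R => RingHom.ker (eval x) := by
  intro x y (hxy : RingHom.ker (eval x) = RingHom.ker (eval y))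
  funext k
  have hx : X k - C (x k) ∈ RingHom.ker (eval x) := by simp
  rw [hxy] at hx
  simpa [sub_eq_zero, eq_comm] using hx

lemma exists_eval_eq {σ ι F : Type*} [Field F] [Finite ι] {p : ι → σ → F}
    (hp : Function.Injective p) (v : ι → F) :
    ∃ f : MvPolynomial σ F, ∀ i, eval (p i) f = v i := by
  have hmax (i : ι) : (RingHom.ker (eval (p i))).IsMaximal :=
    RingHom.ker_isMaximal_of_surjective _ fun c => ⟨C c, eval_C c⟩
  obtain ⟨f, hf⟩ := Ideal.exists_forall_sub_mem_ideal
    (fun i j hij => Ideal.isCoprime_of_isMaximal (injective_ker_eval.ne (hp.ne hij)))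
    fun i => C (v i)
  exact ⟨f, fun i => by simpa [sub_eq_zero] using hf i⟩

lemma finrank_restrictSupport {σ R : Type*} [CommRing R] [StrongRankCondition R]
    (s : Set (σ →₀ ℕ)) : Module.finrank R (restrictSupport R s) = s.ncard :=
  (Module.finrank_eq_nat_card_basis (basisRestrictSupport R s)).trans (Nat.card_coe_set_eq s)

end MvPolynomial

lemma exists_mem_restrictSupport_footprint_eval_eq {σ ι F : Type*} [Field F] [Finite ι]
    (mo : MonomialOrder σ) (I : Ideal (MvPolynomial σ F)) {p : ι → σ → F}
    (hp : Function.Injective p) (hzero : ∀ i, ∀ f ∈ I, eval (p i) f = 0) (v : ι → F) :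
    ∃ r ∈ restrictSupport F (footprint mo I), ∀ i, eval (p i) r = v i := by
  obtain ⟨f, hf⟩ := exists_eval_eq hp v
  have hf_mem : f ∈ I.restrictScalars F ⊔ restrictSupport F (footprint mo I) := by
    simp [sup_restrictSupport_footprint_eq_top]
  obtain ⟨a, ha, r, hr, rfl⟩ := Submodule.mem_sup.1 hf_mem
  exact ⟨r, hr, fun i => by simpa [hzero i a ha] using hf i⟩

theorem footprint_bound_general
    {F : Type*} [Field F] {n : ℕ}
    (mo : MonomialOrder (Fin n)) (I : Ideal (MvPolynomial (Fin n) F))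
    (hfin : (footprint mo I).Finite)
    (ℓ : ℕ) (p : Fin ℓ → (Fin n → F)) (hinj : Function.Injective p)
    (hzero : ∀ j, ∀ f ∈ I, MvPolynomial.eval (p j) f = 0) :
    ℓ ≤ (footprint mo I).ncard := by
  let W := restrictSupport F (footprint mo I)
  have := hfin.to_subtype
  have : Module.Finite F W := .of_basis (basisRestrictSupport F (footprint mo I))
  let E : W →ₗ[F] Fin ℓ → F :=
    LinearMap.pi fun j => (aeval (p j)).toLinearMap.comp W.subtype
  have hE : Function.Surjective E := fun v => by
    obtain ⟨r, hr, hrv⟩ := exists_mem_restrictSupport_footprint_eval_eq mo I hinj hzero v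
    exact ⟨⟨r, hr⟩, funext fun j => by simpa [E, aeval_eq_eval] using hrv j⟩
  calc ℓ = Module.finrank F (Fin ℓ → F) := by simp
    _ ≤ Module.finrank F W := E.finrank_le_finrank_of_surjective hE
    _ = (footprint mo I).ncard := finrank_restrictSupport _

/-- **The footprint bound.** Let `F` be a field, `≺` a monomial ordering on the monomials of
`F[X_1,…,X_n]`, and `I` an ideal whose footprint `Δ_≺(I)` is finite. If `P_1,…,P_ℓ` are `ℓ`
pairwise different common zeros of `I` in `F^n`, then `ℓ ≤ |Δ_≺(I)|`. -/
theorem footprint_bound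
    {F : Type*} [Field F] {n : ℕ} (hn : 0 < n)
    (mo : MonomialOrder (Fin n)) (I : Ideal (MvPolynomial (Fin n) F))
    (hfin : (footprint mo I).Finite)
    (ℓ : ℕ) (p : Fin ℓ → (Fin n → F)) (hinj : Function.Injective p)
    (hzero : ∀ j, ∀ f ∈ I, MvPolynomial.eval (p j) f = 0) :
    ℓ ≤ (footprint mo I).ncard :=
  footprint_bound_general mo I hfin ℓ p hinj hzero
end

section
/- Let q be a prime power, n a positive integer, and ≺ a monomial ordering on the monomials of F_q[X_1, ..., X_n]. Let P(X_1, ..., X_n) be a nonzero polynomial over F_q whose leading monomial with respect to ≺ equals X_1^{i_1} ··· X_n^{i_n} with i_s < q-1 for s = 1, ..., n. Let m be the number of points x in (F_q^*)^n with P(x) ≠ 0. Then m ≥ \prod_{s=1}^n (q-1-i_s). -/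
/-!
A nontrivial linear relation among the functions `x ↦ P(x) x^e` on the non-roots of `P` in
`(F_q^*)^n`, with `e` ranging over the box `e_s < q - 1 - i_s`, yields a nonzero `Q` in that box
such that `P Q` vanishes on all of `(F_q^*)^n`. But the leading exponent `i + deg Q` of `P Q` has
all coordinates below `q - 1`, and such a polynomial cannot vanish on `(F_q^*)^n`. So these
`∏ (q - 1 - i_s)` functions are linearly independent, and the number of non-roots is at least
their number.
-/

open scoped MonomialOrder

namespace IsLeadingMonomialOf

variable {σ : Type*} {mo : MonomialOrder σ} {R : Type*} [CommSemiring R] {f : MvPolynomial σ R}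
  {e : σ →₀ ℕ}

theorem ne_zero (h : IsLeadingMonomialOf mo f e) : f ≠ 0 := by
  rintro rfl
  simp [IsLeadingMonomialOf] at h

theorem degree_eq_s6 (h : IsLeadingMonomialOf mo f e) : mo.degree f = e :=
  mo.toSyn.injective (le_antisymm (h.2 _ (mo.degree_mem_support h.ne_zero)) (mo.le_degree h.1))

end IsLeadingMonomialOf

open MvPolynomial

namespace FiniteField

variable {F : Type*} [Field F] [Fintype F] [DecidableEq F]

theorem sum_units_coe_pow (a : ℕ) :
    ∑ u : Fˣ, (u : F) ^ a = if Fintype.card F - 1 ∣ a then -1 else 0 := by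
  simpa only [Units.val_pow_eq_pow_val] using sum_pow_units F a

theorem sum_prod_units_coe_pow {σ : Type*} [Fintype σ] [DecidableEq σ] (a : σ → ℕ) :
    ∑ x : σ → Fˣ, ∏ s, (x s : F) ^ a s =
      ∏ s, if Fintype.card F - 1 ∣ a s then (-1 : F) else 0 := by
  rw [← Fintype.prod_sum fun s (u : Fˣ) => (u : F) ^ a s]
  exact Finset.prod_congr rfl fun s _ => sum_units_coe_pow (a s)

end FiniteField

namespace MvPolynomial

open FiniteField

variable {σ : Type*} [Fintype σ]

noncomputable def exponentBox (b : σ → ℕ) : Finset (σ →₀ ℕ) :=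
  Finset.univ.finsupp fun s => Finset.range (b s)

theorem mem_exponentBox {b : σ → ℕ} {e : σ →₀ ℕ} :
    e ∈ exponentBox b ↔ ∀ s, e s < b s := by
  simp [exponentBox, Finset.mem_finsupp_iff]

theorem card_exponentBox (b : σ → ℕ) : (exponentBox b).card = ∏ s, b s := by
  simp [exponentBox]

variable [DecidableEq σ] {F : Type*} [Field F] [Fintype F] [DecidableEq F]

theorem sum_eval_units_mul_prod_pow (f : MvPolynomial σ F) (b : σ → ℕ) :
    ∑ x : σ → Fˣ, eval (fun s => (x s : F)) f * ∏ s, (x s : F) ^ b s =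
      ∑ e ∈ f.support, coeff e f *
        ∏ s, if Fintype.card F - 1 ∣ e s + b s then (-1 : F) else 0 := by
  simp_rw [eval_eq', Finset.sum_mul]
  rw [Finset.sum_comm]
  refine Finset.sum_congr rfl fun e _ => ?_
  simp_rw [mul_assoc, ← Finset.mul_sum, ← Finset.prod_mul_distrib, ← pow_add]
  rw [sum_prod_units_coe_pow]

/-- Pairing `f` against the character `x ↦ x ^ (q - 1 - L)`, where `L` is its leading exponent,
isolates the leading coefficient: every other monomial `e ≺ L` has some `e s < L s`, and then
`e s + (q - 1 - L s)` lies strictly between `0` and `q - 1`. -/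
theorem eq_zero_of_forall_eval_units_eq_zero (mo : MonomialOrder σ)
    {f : MvPolynomial σ F} (hdeg : ∀ s, mo.degree f s < Fintype.card F - 1)
    (hf : ∀ x : σ → Fˣ, eval (fun s => (x s : F)) f = 0) : f = 0 := by
  by_contra hf0
  set L := mo.degree f
  set d := Fintype.card F - 1
  have hsum := sum_eval_units_mul_prod_pow f fun s => d - L s
  simp only [hf, zero_mul, Finset.sum_const_zero] at hsum
  rw [Finset.sum_eq_single L ?others (fun hL => absurd (mo.degree_mem_support hf0) hL)] at hsum
  case others =>
    intro e he heL
    obtain ⟨s, hs⟩ : ∃ s, e s < L s := by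
      by_contra! hLe
      exact heL (mo.toSyn.injective (le_antisymm (mo.le_degree he)
        (mo.toSyn_monotone (Finsupp.le_def.mpr hLe))))
    have := hdeg s
    refine mul_eq_zero_of_right _ (Finset.prod_eq_zero (Finset.mem_univ s) (if_neg ?_))
    exact Nat.not_dvd_of_pos_of_lt (by omega) (by omega)
  have hprod : ∏ s, (if d ∣ L s + (d - L s) then (-1 : F) else 0) = (-1) ^ Fintype.card σ := by
    simp [Nat.add_sub_cancel' (hdeg _).le]
  rw [hprod] at hsum
  exact mul_ne_zero (mo.coeff_degree_ne_zero_iff.mpr hf0)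
    (pow_ne_zero _ (neg_ne_zero.mpr one_ne_zero)) hsum.symm

theorem exists_eval_units_mul_ne_zero (mo : MonomialOrder σ)
    {P Q : MvPolynomial σ F} (hP : P ≠ 0) (hQ : Q ≠ 0)
    (hQS : Q ∈ restrictSupport F (exponentBox fun s => Fintype.card F - 1 - mo.degree P s)) :
    ∃ x : σ → Fˣ, eval (fun s => (x s : F)) (P * Q) ≠ 0 := by
  by_contra! hPQ
  refine mul_ne_zero hP hQ (eq_zero_of_forall_eval_units_eq_zero mo (fun s => ?_) hPQ)
  have hQdeg :=
    mem_exponentBox.mp ((mem_restrictSupport_iff F).mp hQS (mo.degree_mem_support hQ)) s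
  rw [mo.degree_mul hP hQ, Finsupp.add_apply]
  omega

theorem prod_sub_degree_le_card_nonroots (mo : MonomialOrder σ)
    {P : MvPolynomial σ F} (hP : P ≠ 0) :
    ∏ s, (Fintype.card F - 1 - mo.degree P s) ≤
      Nat.card {x : σ → F | (∀ s, x s ≠ 0) ∧ eval x P ≠ 0} := by
  classical
  set A := {x : σ → F | (∀ s, x s ≠ 0) ∧ eval x P ≠ 0}
  set S := exponentBox fun s => Fintype.card F - 1 - mo.degree P s
  let Φ : restrictSupport F (S : Set (σ →₀ ℕ)) →ₗ[F] (A → F) :=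
    { toFun Q x := eval x.1 (P * Q)
      map_add' Q R := by ext; simp [mul_add]
      map_smul' c Q := by ext; simp }
  have hΦ : Function.Injective Φ := by
    rw [← LinearMap.ker_eq_bot, LinearMap.ker_eq_bot']
    intro Q hQ
    by_contra hQ0
    obtain ⟨x, hx⟩ := exists_eval_units_mul_ne_zero mo hP (by simpa using hQ0) Q.2
    have hPx : eval (fun s => (x s : F)) P ≠ 0 := left_ne_zero_of_mul (by rwa [map_mul] at hx)
    exact hx (congrFun hQ ⟨_, fun s => (x s).ne_zero, hPx⟩)
  calc ∏ s, (Fintype.card F - 1 - mo.degree P s) = S.card := (card_exponentBox _).symm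
    _ = Module.finrank F (restrictSupport F (S : Set (σ →₀ ℕ))) := by
      simp [Module.finrank_eq_card_basis (basisRestrictSupport F _)]
    _ ≤ Module.finrank F (A → F) := LinearMap.finrank_le_finrank_of_injective hΦ
    _ = Nat.card A := by simp [Nat.card_eq_fintype_card]

end MvPolynomial

theorem card_nonroots_ge_prod_general
    {F : Type*} [Field F] [Fintype F] {q n : ℕ} (hq : Fintype.card F = q)
    (mo : MonomialOrder (Fin n)) (P : MvPolynomial (Fin n) F)
    (i : Fin n →₀ ℕ) (hlm : IsLeadingMonomialOf mo P i)
    (m : ℕ)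
    (hm : m = Nat.card {x : Fin n → F | (∀ s, x s ≠ 0) ∧ MvPolynomial.eval x P ≠ 0}) :
    ∏ s : Fin n, (q - 1 - i s) ≤ m := by
  classical
  subst hq hm
  rw [← hlm.degree_eq_s6]
  exact MvPolynomial.prod_sub_degree_le_card_nonroots mo hlm.ne_zero

/-- **Proposition 2.** Let `P ∈ F_q[X_1,…,X_n]` be nonzero with leading monomial
`X_1^{i_1} ⋯ X_n^{i_n}` (with respect to a monomial ordering) where `i_s < q-1` for all `s`.
If `m` is the number of points of `(F_q^*)^n` which are not roots of `P`, then
`m ≥ ∏_{s=1}^n (q-1-i_s)`. -/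
theorem card_nonroots_ge_prod
    {F : Type*} [Field F] [Fintype F] {q n : ℕ} (hq : Fintype.card F = q) (hn : 0 < n)
    (mo : MonomialOrder (Fin n)) (P : MvPolynomial (Fin n) F) (hP : P ≠ 0)
    (i : Fin n →₀ ℕ) (hlm : IsLeadingMonomialOf mo P i) (hi : ∀ s, i s < q - 1)
    (m : ℕ)
    (hm : m = Nat.card {x : Fin n → F | (∀ s, x s ≠ 0) ∧ MvPolynomial.eval x P ≠ 0}) :
    ∏ s : Fin n, (q - 1 - i s) ≤ m :=
  card_nonroots_ge_prod_general hq mo P i hlm m hm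
end

section
/- Let q be a prime power and n a positive integer. Let P(X_1, ..., X_n) be a nonzero polynomial over F_q with deg_{X_i} P < q-1 for i = 1, ..., n, and let m be the number of x in (F_q^*)^n with P(x) ≠ 0. Then there does not exist any (k_1, ..., k_n) in {0, 1, ..., q-2}^n such that the support of the reduction of X_1^{k_1} ··· X_n^{k_n} P(X_1, ..., X_n) modulo {X_1^{q-1} - 1, ..., X_n^{q-1} - 1} is disjoint from U(q, m, n); equivalently, for every such (k_1, ..., k_n), this support contains at least one monomial of U(q, m, n). -/
/-!
A nonzero polynomial `Q` over `F_q` has a monomial `X^e` in its support with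
`∏ᵢ (q - 1 - eᵢ) ≤ #{x ∈ (F_q^*)ⁿ | Q(x) ≠ 0}`: peel off the first variable, take the
monomial supplied by induction for the leading coefficient in `X₁` (of degree `d`), and note that
above each point where that coefficient does not vanish at least `q - 1 - d` of the nonzero values
of `X₁` are not roots.

Multiplying `P` by a monomial and reducing modulo `Xᵢ^{q-1} - 1` changes neither the values of `P`
on the torus nor (hence) the number `m`, and leaves a polynomial with all exponents `< q - 1`,
which is nonzero because `P` does not vanish on the whole torus. The monomial given by the bound
for this polynomial lies in `U(q, m, n)`.
-/

/-- Reduction of an exponent vector modulo `q-1` in each coordinate. -/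
noncomputable def reduceExp (q : ℕ) {n : ℕ} (e : Fin n →₀ ℕ) : Fin n →₀ ℕ :=
  Finsupp.mapRange (· % (q - 1)) (Nat.zero_mod _) e

/-- Reduction of a polynomial modulo `{X_1^{q-1} - 1, …, X_n^{q-1} - 1}`: each exponent of
each variable is replaced by its residue modulo `q-1`. -/
noncomputable def reduceMod {F : Type*} [Field F] (q : ℕ) {n : ℕ}
    (Q : MvPolynomial (Fin n) F) : MvPolynomial (Fin n) F :=
  Q.support.sum fun e => MvPolynomial.monomial (reduceExp q e) (Q.coeff e)

/-- The exponent vector `e` belongs to the set `U(q,m,n)`, i.e. the monomial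
`X_1^{e_1} ⋯ X_n^{e_n}` lies in `M(q,n)` and `∏_{s=1}^n (q-1-e_s) ≤ m`. -/
def inU (q m : ℕ) {n : ℕ} (e : Fin n →₀ ℕ) : Prop :=
  (∀ i, e i < q - 1) ∧ ∏ s : Fin n, (q - 1 - e s) ≤ m

open MvPolynomial Finset

theorem Polynomial.card_sub_natDegree_le_card_filter_eval_ne_zero {R : Type*} [CommRing R]
    [IsDomain R] [DecidableEq R] {u : Polynomial R} (hu : u ≠ 0) (S : Finset R) :
    #S - u.natDegree ≤ #{a ∈ S | u.eval a ≠ 0} := by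
  have hroots : #{a ∈ S | ¬u.eval a ≠ 0} ≤ u.natDegree :=
    card_le_degree_of_subset_roots fun a ha => by
      rw [Finset.filter_val, Multiset.mem_filter, not_not] at ha
      exact (mem_roots hu).2 ha.2
  have hsplit := card_filter_add_card_filter_not (s := S) fun a => u.eval a ≠ 0
  omega

section Torus

variable {F : Type*} [Field F] [Fintype F] [DecidableEq F]
variable {σ : Type*} [Fintype σ] [DecidableEq σ]

noncomputable def nonzerosOnTorus (Q : MvPolynomial σ F) : Finset (σ → F) :=
  {x | (∀ i, x i ≠ 0) ∧ eval x Q ≠ 0}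

@[simp]
theorem mem_nonzerosOnTorus {Q : MvPolynomial σ F} {x : σ → F} :
    x ∈ nonzerosOnTorus Q ↔ (∀ i, x i ≠ 0) ∧ eval x Q ≠ 0 := by
  simp [nonzerosOnTorus]

theorem nonzerosOnTorus_monomial_mul (k : σ →₀ ℕ) {c : F} (hc : c ≠ 0)
    (Q : MvPolynomial σ F) :
    nonzerosOnTorus (monomial k c * Q) = nonzerosOnTorus Q := by
  ext x
  simp only [mem_nonzerosOnTorus, map_mul, eval_monomial, mul_ne_zero_iff, and_congr_right_iff]
  intro hx
  have hk : (k.prod fun i e => x i ^ e) ≠ 0 :=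
    Finset.prod_ne_zero_iff.2 fun i _ => pow_ne_zero _ (hx i)
  tauto

variable {n : ℕ}

theorem card_sub_natDegree_le_card_fiber_tail (Q : MvPolynomial (Fin (n + 1)) F) {y : Fin n → F}
    (hy : y ∈ nonzerosOnTorus (finSuccEquiv F n Q).leadingCoeff) :
    Fintype.card F - 1 - (finSuccEquiv F n Q).natDegree ≤
      #{x ∈ nonzerosOnTorus Q | Fin.tail x = y} := by
  set p := finSuccEquiv F n Q
  set u := p.map (eval y)
  rw [mem_nonzerosOnTorus] at hy
  have hlead : u.coeff p.natDegree = eval y p.leadingCoeff := Polynomial.coeff_map _ _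
  have hu : u ≠ 0 := fun h => hy.2 (by rw [← hlead, h, Polynomial.coeff_zero])
  have hdeg : u.natDegree ≤ p.natDegree := Polynomial.natDegree_map_le
  set S : Finset F := {a ∈ univ.erase 0 | u.eval a ≠ 0}
  calc Fintype.card F - 1 - p.natDegree ≤ #(univ.erase (0 : F)) - u.natDegree := by
        rw [card_erase_of_mem (mem_univ _), card_univ]
        omega
    _ ≤ #S := Polynomial.card_sub_natDegree_le_card_filter_eval_ne_zero hu _
    _ = #(S.image fun a => (Fin.cons a y : Fin (n + 1) → F)) :=
        (card_image_of_injective _ (Fin.cons_left_injective (α := fun _ => F) y)).symm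
    _ ≤ #{x ∈ nonzerosOnTorus Q | Fin.tail x = y} := by
        refine card_le_card fun x hx => ?_
        obtain ⟨a, ha, rfl⟩ := mem_image.1 hx
        rw [mem_filter, mem_erase] at ha
        refine mem_filter.2 ⟨mem_nonzerosOnTorus.2 ⟨?_, ?_⟩, Fin.tail_cons _ _⟩
        · exact Fin.forall_fin_succ.2 ⟨by simpa using ha.1.1, by simpa using hy.1⟩
        · rw [eval_eq_eval_mv_eval']
          exact ha.2

theorem card_nonzerosOnTorus_leadingCoeff_mul_le (Q : MvPolynomial (Fin (n + 1)) F) :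
    #(nonzerosOnTorus (finSuccEquiv F n Q).leadingCoeff) *
        (Fintype.card F - 1 - (finSuccEquiv F n Q).natDegree) ≤ #(nonzerosOnTorus Q) := by
  simpa using card_mul_le_card_mul (fun y x => Fin.tail x = y)
    (fun y hy => card_sub_natDegree_le_card_fiber_tail Q hy)
    fun x _ => card_le_one.2 fun y hy y' hy' =>
      (mem_filter.1 hy).2.symm.trans (mem_filter.1 hy').2

theorem exists_mem_support_prod_le_card_nonzerosOnTorus :
    ∀ {n : ℕ} {Q : MvPolynomial (Fin n) F}, Q ≠ 0 →
      ∃ e ∈ Q.support, ∏ i, (Fintype.card F - 1 - e i) ≤ #(nonzerosOnTorus Q)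
  | 0, Q, hQ => by
    obtain ⟨c, rfl⟩ := C_surjective (Fin 0) Q
    have hc : c ≠ 0 := by rintro rfl; exact hQ C_0
    refine ⟨0, by simpa using hc, ?_⟩
    have hx : (isEmptyElim : Fin 0 → F) ∈ nonzerosOnTorus (C c) :=
      mem_nonzerosOnTorus.2 ⟨isEmptyElim, by simpa using hc⟩
    simpa using card_pos.2 ⟨_, hx⟩
  | n + 1, Q, hQ => by
    set p := finSuccEquiv F n Q
    have hp : p ≠ 0 := (map_ne_zero_iff _ (finSuccEquiv F n).injective).2 hQ
    obtain ⟨f, hf, hfle⟩ :=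
      exists_mem_support_prod_le_card_nonzerosOnTorus (Polynomial.leadingCoeff_ne_zero.2 hp)
    refine ⟨f.cons p.natDegree, ?_, ?_⟩
    · rw [mem_support_iff, ← finSuccEquiv_coeff_coeff]
      exact mem_support_iff.1 hf
    calc ∏ i, (Fintype.card F - 1 - f.cons p.natDegree i)
        = (Fintype.card F - 1 - p.natDegree) * ∏ i, (Fintype.card F - 1 - f i) := by
          simp [Fin.prod_univ_succ]
      _ ≤ (Fintype.card F - 1 - p.natDegree) * #(nonzerosOnTorus p.leadingCoeff) := by gcongr
      _ ≤ #(nonzerosOnTorus Q) := by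
          rw [mul_comm]
          exact card_nonzerosOnTorus_leadingCoeff_mul_le Q

theorem nonzerosOnTorus_nonempty {Q : MvPolynomial (Fin n) F} (hQ : Q ≠ 0)
    (hdeg : ∀ i, Q.degreeOf i < Fintype.card F - 1) : (nonzerosOnTorus Q).Nonempty := by
  obtain ⟨e, he, hle⟩ := exists_mem_support_prod_le_card_nonzerosOnTorus hQ
  refine card_pos.1 (lt_of_lt_of_le (prod_pos fun i _ => Nat.sub_pos_of_lt ?_) hle)
  exact (degreeOf_lt_iff (Nat.zero_lt_of_lt (hdeg i))).1 (hdeg i) e he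

end Torus

section Reduction

variable {F : Type*} [Field F] {n : ℕ}

theorem lt_of_mem_support_reduceMod {q : ℕ} (hq : 0 < q - 1) {Q : MvPolynomial (Fin n) F}
    {e : Fin n →₀ ℕ} (he : e ∈ (reduceMod q Q).support) (i : Fin n) : e i < q - 1 := by
  rw [mem_support_iff, reduceMod, coeff_sum] at he
  obtain ⟨e', _, hne⟩ := exists_ne_zero_of_sum_ne_zero he
  obtain rfl : reduceExp q e' = e := by
    by_contra h
    exact hne (by rw [coeff_monomial, if_neg h])
  exact Nat.mod_lt _ hq

theorem eval_reduceMod [Fintype F] (Q : MvPolynomial (Fin n) F) {x : Fin n → F}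
    (hx : ∀ i, x i ≠ 0) : eval x (reduceMod (Fintype.card F) Q) = eval x Q := by
  rw [reduceMod, map_sum, eval_eq' x Q]
  refine sum_congr rfl fun e _ => ?_
  rw [eval_monomial, Finsupp.prod_fintype _ _ fun i => pow_zero _]
  congr 1
  refine prod_congr rfl fun i _ => ?_
  rw [reduceExp, Finsupp.mapRange_apply]
  exact (pow_eq_pow_mod _ (FiniteField.pow_card_sub_one_eq_one _ (hx i))).symm

theorem nonzerosOnTorus_reduceMod [Fintype F] [DecidableEq F] (Q : MvPolynomial (Fin n) F) :
    nonzerosOnTorus (reduceMod (Fintype.card F) Q) = nonzerosOnTorus Q := by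
  ext x
  simp only [mem_nonzerosOnTorus, and_congr_right_iff]
  intro hx
  rw [eval_reduceMod Q hx]

end Reduction

theorem support_of_shift_meets_U_general
    {F : Type*} [Field F] [Fintype F] {q n : ℕ} (hq : Fintype.card F = q)
    (P : MvPolynomial (Fin n) F) (hP : P ≠ 0)
    (hdeg : ∀ i, P.degreeOf i < q - 1)
    (m : ℕ)
    (hm : m = Nat.card {x : Fin n → F | (∀ i, x i ≠ 0) ∧ MvPolynomial.eval x P ≠ 0}) :
    ¬ ∃ k : Fin n →₀ ℕ, (∀ i, k i ≤ q - 2) ∧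
      ∀ e ∈ (reduceMod q (MvPolynomial.monomial k (1 : F) * P)).support, ¬ inU q m e := by
  classical
  subst hq
  rintro ⟨k, -, hdisj⟩
  have hq1 : 0 < Fintype.card F - 1 := Nat.sub_pos_of_lt Fintype.one_lt_card
  have hm_card : m = #(nonzerosOnTorus P) := by
    rw [hm, Nat.card_coe_set_eq, Set.ncard_eq_toFinset_card']
    congr 1
    ext x
    simp
  set R := reduceMod (Fintype.card F) (monomial k (1 : F) * P)
  have hR : nonzerosOnTorus R = nonzerosOnTorus P := by
    rw [nonzerosOnTorus_reduceMod, nonzerosOnTorus_monomial_mul k one_ne_zero]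
  have hR0 : R ≠ 0 := by
    obtain ⟨x, hx⟩ := hR ▸ nonzerosOnTorus_nonempty hP hdeg
    rintro hR0
    exact (mem_nonzerosOnTorus.1 hx).2 (by rw [hR0, map_zero])
  obtain ⟨e, he, hle⟩ := exists_mem_support_prod_le_card_nonzerosOnTorus hR0
  exact hdisj e he ⟨lt_of_mem_support_reduceMod hq1 he, hm_card ▸ hR ▸ hle⟩

/-- **Theorem 3.** Let `P ∈ F_q[X_1,…,X_n]` be nonzero with `deg_{X_i} P < q-1` for all `i`,
and let `m` be the number of `x ∈ (F_q^*)^n` with `P(x) ≠ 0`. Then there is no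
`(k_1,…,k_n) ∈ {0,…,q-2}^n` such that the support of
`X_1^{k_1} ⋯ X_n^{k_n} P mod {X_1^{q-1}-1, …, X_n^{q-1}-1}` is disjoint from `U(q,m,n)`. -/
theorem support_of_shift_meets_U
    {F : Type*} [Field F] [Fintype F] {q n : ℕ} (hq : Fintype.card F = q) (hn : 0 < n)
    (P : MvPolynomial (Fin n) F) (hP : P ≠ 0)
    (hdeg : ∀ i, P.degreeOf i < q - 1)
    (m : ℕ)
    (hm : m = Nat.card {x : Fin n → F | (∀ i, x i ≠ 0) ∧ MvPolynomial.eval x P ≠ 0}) :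
    ¬ ∃ k : Fin n →₀ ℕ, (∀ i, k i ≤ q - 2) ∧
      ∀ e ∈ (reduceMod q (MvPolynomial.monomial k (1 : F) * P)).support, ¬ inU q m e :=
  support_of_shift_meets_U_general hq P hP hdeg m hm
end

section
/- Let q be a prime power, n a positive integer, and for i = 1, ..., n let S_i ⊆ F_q^* with 0 < |S_i| < q-1, not all |S_i| equal to q-2. Set T_i = F_q^* \ S_i, t_i = |T_i|, and m = \prod_{i=1}^n t_i (so m ≥ 2). Let P(X_1,...,X_n) = \prod_{i=1}^n \prod_{x ∈ S_i}(X_i - x). Then there exists (k_1, ..., k_n) with 0 < k_i < q-1 for all i such that the support of the reduction of X_1^{k_1} ··· X_n^{k_n} P modulo {X_1^{q-1} - 1, ..., X_n^{q-1} - 1} is disjoint from U(q, m-1, n), if and only if for every i = 1, ..., n the set T_i is contained in a coset γ_i H_i for some γ_i in F_q^* and some proper multiplicative subgroup H_i of F_q^*. -/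
set_option linter.unusedSectionVars false
set_option maxHeartbeats 1000000

open Finset Polynomial

section Aux

variable {F : Type*} [Field F] [Fintype F] [DecidableEq F]

/-- coefficient sums -/
noncomputable def auxTC (S : Finset F) (k r b : ℕ) : F :=
  -∑ u : Fˣ, ((u : F)) ^ k * (∏ x ∈ S, ((u : F) - x)) * ((u : F)) ^ (r - b)

noncomputable def auxG (S : Finset F) (k r : ℕ) : Polynomial F :=
  ∑ b ∈ Finset.range r, Polynomial.C (auxTC S k r b) * Polynomial.X ^ b

lemma aux_orth {r : ℕ} (hu : Fintype.card Fˣ = r) (d : ℕ) :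
    ∑ u : Fˣ, ((u : F)) ^ d = if r ∣ d then -1 else 0 := by
  have h := FiniteField.sum_pow_units F d
  rw [Fintype.card_units] at hu
  rw [hu] at h
  simpa using h

lemma aux_dvd {r a b : ℕ} (ha : a < r) (hb : b < r) : r ∣ (a + (r - b)) ↔ a = b := by
  constructor
  · rintro ⟨c, hc⟩
    rcases Nat.lt_or_ge c 2 with h2 | h2
    · interval_cases c <;> omega
    · have := Nat.mul_le_mul_left r h2; omega
  · rintro rfl; exact ⟨1, by omega⟩

lemma aux_upow {r : ℕ} (hu : Fintype.card Fˣ = r) (u : Fˣ) : ((u : F)) ^ r = 1 := by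
  have h : u ^ r = 1 := by rw [← hu]; exact pow_card_eq_one
  have := congrArg (fun z : Fˣ => (z : F)) h
  simpa using this

lemma aux_geom {r : ℕ} (hu : Fintype.card Fˣ = r) (hr1 : ((r : ℕ) : F) = -1)
    (u v : Fˣ) :
    ∑ b ∈ Finset.range r, ((u : F)) ^ (r - b) * ((v : F)) ^ b
      = if u = v then -1 else 0 := by
  set w : Fˣ := v * u⁻¹ with hw
  have hterm : ∀ b ∈ Finset.range r,
      ((u : F)) ^ (r - b) * ((v : F)) ^ b = ((w : F)) ^ b := by
    intro b hb
    have hb' : b ≤ r := (Finset.mem_range.mp hb).le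
    have hv : (v : F) = (w : F) * (u : F) := by
      rw [hw]; push_cast; field_simp
    rw [hv, mul_pow, ← mul_assoc, mul_comm (((u : F)) ^ (r - b)), mul_assoc, ← pow_add,
      Nat.sub_add_cancel hb', aux_upow hu, mul_one]
  rw [Finset.sum_congr rfl hterm]
  by_cases huv : u = v
  · have hw1 : w = 1 := by rw [hw, huv, mul_inv_cancel]
    rw [if_pos huv, hw1]
    simp only [Units.val_one, one_pow, Finset.sum_const, Finset.card_range, nsmul_eq_mul, mul_one]
    exact hr1
  · have hw1 : (w : F) ≠ 1 := by
      intro h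
      apply huv
      have : w = 1 := Units.ext (by simpa using h)
      rw [hw] at this
      have := mul_eq_one_iff_eq_inv.mp this
      simp at this
      exact this.symm
    rw [if_neg huv, geom_sum_eq hw1, aux_upow hu, sub_self, zero_div]

lemma aux_coeff {r : ℕ} (hu : Fintype.card Fˣ = r) (p : F[X])
    (hdeg : p.natDegree < r) {b : ℕ} (hb : b < r) :
    -∑ u : Fˣ, p.eval (u : F) * ((u : F)) ^ (r - b) = p.coeff b := by
  have step : ∀ u : Fˣ, p.eval (u : F) * ((u : F)) ^ (r - b)
      = ∑ i ∈ Finset.range (p.natDegree + 1), p.coeff i * ((u : F)) ^ (i + (r - b)) := by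
    intro u
    rw [Polynomial.eval_eq_sum_range, Finset.sum_mul]
    exact Finset.sum_congr rfl fun i _ => by rw [pow_add, mul_assoc]
  rw [Finset.sum_congr rfl fun u _ => step u, Finset.sum_comm]
  have step2 : ∀ i ∈ Finset.range (p.natDegree + 1),
      (∑ u : Fˣ, p.coeff i * ((u : F)) ^ (i + (r - b)))
        = if i = b then -p.coeff i else 0 := by
    intro i hi
    rw [← Finset.mul_sum, aux_orth hu]
    have hi' : i < r := lt_of_le_of_lt (Nat.lt_succ_iff.mp (Finset.mem_range.mp hi)) hdeg
    by_cases hib : i = b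
    · rw [if_pos ((aux_dvd hi' hb).mpr hib), if_pos hib]; ring
    · rw [if_neg (fun hd => hib ((aux_dvd hi' hb).mp hd)), if_neg hib, mul_zero]
  rw [Finset.sum_congr rfl step2,
    Finset.sum_ite_eq' (Finset.range (p.natDegree + 1)) b (fun i => -p.coeff i)]
  by_cases hbd : b ∈ Finset.range (p.natDegree + 1)
  · rw [if_pos hbd]; ring
  · rw [if_neg hbd, Polynomial.coeff_eq_zero_of_natDegree_lt (by
      simp only [Finset.mem_range, not_lt] at hbd; omega)]
    simp

lemma aux_gp_coeff (S : Finset F) (k r : ℕ) (b : ℕ) :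
    (auxG S k r).coeff b = if b < r then auxTC S k r b else 0 := by
  unfold auxG
  rw [Polynomial.finset_sum_coeff]
  simp only [Polynomial.coeff_C_mul, Polynomial.coeff_X_pow, mul_ite, mul_one, mul_zero]
  rw [Finset.sum_ite_eq (Finset.range r) b (fun b' => auxTC S k r b')]
  simp [Finset.mem_range]

lemma aux_gp_eval {r : ℕ} (hu : Fintype.card Fˣ = r) (hr1 : ((r : ℕ) : F) = -1)
    (S : Finset F) (k : ℕ) (v : Fˣ) :
    (auxG S k r).eval (v : F) = ((v : F)) ^ k * ∏ x ∈ S, ((v : F) - x) := by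
  unfold auxG
  rw [Polynomial.eval_finset_sum]
  simp only [Polynomial.eval_mul, Polynomial.eval_C, Polynomial.eval_pow, Polynomial.eval_X]
  have step : ∀ b ∈ Finset.range r, auxTC S k r b * ((v : F)) ^ b
      = ∑ u : Fˣ, -(((u : F)) ^ k * (∏ x ∈ S, ((u : F) - x)) * (((u : F)) ^ (r - b) * ((v : F)) ^ b)) := by
    intro b _
    rw [auxTC, neg_mul, Finset.sum_mul, ← Finset.sum_neg_distrib]
    exact Finset.sum_congr rfl fun u _ => by ring
  rw [Finset.sum_congr rfl step, Finset.sum_comm]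
  have step2 : ∀ u : Fˣ,
      (∑ b ∈ Finset.range r, -(((u : F)) ^ k * (∏ x ∈ S, ((u : F) - x)) * (((u : F)) ^ (r - b) * ((v : F)) ^ b)))
      = if u = v then ((u : F)) ^ k * ∏ x ∈ S, ((u : F) - x) else 0 := by
    intro u
    rw [Finset.sum_neg_distrib, ← Finset.mul_sum, aux_geom hu hr1 u v]
    by_cases huv : u = v
    · rw [if_pos huv, if_pos huv]; ring
    · rw [if_neg huv, if_neg huv]; ring
  rw [Finset.sum_congr rfl (fun u _ => step2 u),
    Finset.sum_ite_eq' Finset.univ v (fun u : Fˣ => ((u : F)) ^ k * ∏ x ∈ S, ((u : F) - x)),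
    if_pos (Finset.mem_univ v)]

end Aux

section A2
variable {F : Type*} [Field F] [Fintype F] [DecidableEq F]

lemma aux_exists_unit {r : ℕ} (hu : Fintype.card Fˣ = r) (S : Finset F) (hS0 : (0:F) ∉ S)
    (hsr : S.card < r) : ∃ v : Fˣ, (v : F) ∉ S := by
  have hsub : S ⊆ Finset.univ.erase (0:F) :=
    fun x hx => Finset.mem_erase.mpr ⟨fun h => hS0 (h ▸ hx), Finset.mem_univ x⟩
  have hcard : (Finset.univ.erase (0:F)).card = r := by
    rw [Finset.card_erase_of_mem (Finset.mem_univ _), Finset.card_univ, ← hu, Fintype.card_units]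
  have hne : (Finset.univ.erase (0:F) \ S).Nonempty := by
    rw [← Finset.card_pos, Finset.card_sdiff_of_subset hsub, hcard]; omega
  obtain ⟨x, hx⟩ := hne
  rw [Finset.mem_sdiff, Finset.mem_erase] at hx
  exact ⟨Units.mk0 x hx.1.1, by simpa using hx.2⟩

lemma aux_fpoly_monic (S : Finset F) : (∏ x ∈ S, (X - C x)).Monic :=
  monic_prod_of_monic _ _ fun x _ => monic_X_sub_C x

lemma aux_fpoly_natDegree (S : Finset F) : (∏ x ∈ S, (X - C x)).natDegree = S.card := by
  rw [Polynomial.natDegree_prod_of_monic _ _ (fun x _ => monic_X_sub_C x)]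
  simp

lemma aux_fpoly_eval (S : Finset F) (v : F) :
    (∏ x ∈ S, (X - C x)).eval v = ∏ x ∈ S, (v - x) := by
  rw [Polynomial.eval_prod]; simp

lemma aux_card_le {p : F[X]} (hp : p ≠ 0) (S : Finset F) (hvan : ∀ x ∈ S, p.eval x = 0) :
    S.card ≤ p.natDegree := by
  apply Polynomial.card_le_degree_of_subset_roots
  intro x hx
  have hx' : x ∈ S := hx
  exact Multiset.mem_of_le (le_refl _) ((Polynomial.mem_roots').mpr ⟨hp, hvan x hx'⟩)
end A2


section A3
variable {F : Type*} [Field F] [Fintype F] [DecidableEq F]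

lemma aux_tc_exists {r : ℕ} (hu : Fintype.card Fˣ = r) (hr1 : ((r : ℕ) : F) = -1)
    (S : Finset F) (hS0 : (0:F) ∉ S) (hsr : S.card < r) (k : ℕ) :
    ∃ b, b < r ∧ auxTC S k r b ≠ 0 := by
  by_contra hall
  push_neg at hall
  have hg : auxG S k r = 0 := by
    apply Polynomial.ext
    intro b
    rw [aux_gp_coeff, Polynomial.coeff_zero]
    by_cases hb : b < r
    · rw [if_pos hb]; exact hall b hb
    · rw [if_neg hb]
  obtain ⟨v, hv⟩ := aux_exists_unit hu S hS0 hsr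
  have heval := aux_gp_eval hu hr1 S k v
  rw [hg] at heval
  simp only [Polynomial.eval_zero] at heval
  have h1 : ((v:F))^k ≠ 0 := pow_ne_zero _ (Units.ne_zero v)
  have h2 : (∏ x ∈ S, ((v:F) - x)) ≠ 0 :=
    Finset.prod_ne_zero_iff.mpr fun x hx => sub_ne_zero.mpr (fun h => hv (h ▸ hx))
  exact (mul_ne_zero h1 h2) heval.symm

lemma aux_gp_eval_S {r : ℕ} (hu : Fintype.card Fˣ = r) (hr1 : ((r : ℕ) : F) = -1)
    (S : Finset F) (hS0 : (0:F) ∉ S) (k : ℕ) {x : F} (hx : x ∈ S) :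
    (auxG S k r).eval x = 0 := by
  have hx0 : x ≠ 0 := fun h => hS0 (h ▸ hx)
  have h := aux_gp_eval hu hr1 S k (Units.mk0 x hx0)
  simp only [Units.val_mk0] at h
  rw [h, Finset.prod_eq_zero hx (sub_self x), mul_zero]

lemma aux_rigid {r : ℕ} (hu : Fintype.card Fˣ = r) (hr1 : ((r : ℕ) : F) = -1)
    (S : Finset F) (hS0 : (0:F) ∉ S) (hsr : S.card < r) (k : ℕ)
    (hvan : ∀ b, S.card < b → b < r → auxTC S k r b = 0) :
    ∀ v : Fˣ, (v:F) ∉ S → ((v:F))^k = auxTC S k r S.card := by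
  set c := auxTC S k r S.card with hc
  have hfd : (∏ x ∈ S, (X - C x)).natDegree = S.card := aux_fpoly_natDegree S
  have hgcoeff : ∀ b, S.card < b → (auxG S k r).coeff b = 0 := by
    intro b hb
    rw [aux_gp_coeff]
    by_cases hbr : b < r
    · rw [if_pos hbr]; exact hvan b hb hbr
    · rw [if_neg hbr]
  set h : F[X] := auxG S k r - C c * ∏ x ∈ S, (X - C x) with hh
  have hhcoeff : ∀ b, S.card ≤ b → h.coeff b = 0 := by
    intro b hb
    rcases eq_or_lt_of_le hb with heq | hlt
    · rw [hh, Polynomial.coeff_sub, Polynomial.coeff_C_mul, ← heq]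
      have h1 : (∏ x ∈ S, (X - C x)).coeff S.card = 1 := by
        rw [← hfd]; exact (aux_fpoly_monic S).coeff_natDegree
      rw [h1, mul_one, aux_gp_coeff, if_pos hsr, ← hc, sub_self]
    · rw [hh, Polynomial.coeff_sub, hgcoeff b hlt, Polynomial.coeff_C_mul,
        Polynomial.coeff_eq_zero_of_natDegree_lt (by rw [hfd]; exact hlt), mul_zero, sub_zero]
  have hhvan : ∀ x ∈ S, h.eval x = 0 := by
    intro x hx
    have hfx : (∏ x ∈ S, (X - C x) : F[X]).eval x = 0 := by
      rw [aux_fpoly_eval]; exact Finset.prod_eq_zero hx (sub_self x)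
    rw [hh, Polynomial.eval_sub, Polynomial.eval_mul, Polynomial.eval_C,
      aux_gp_eval_S hu hr1 S hS0 k hx, hfx, mul_zero, sub_zero]
  have hzero : h = 0 := by
    by_contra hne
    have h1 : S.card ≤ h.natDegree := aux_card_le hne S hhvan
    have h2 : h.natDegree ≤ S.card :=
      Polynomial.natDegree_le_iff_coeff_eq_zero.mpr fun N hN => hhcoeff N hN.le
    have h3 : h.coeff h.natDegree ≠ 0 := by
      rw [← Polynomial.leadingCoeff]; exact Polynomial.leadingCoeff_ne_zero.mpr hne
    exact h3 (hhcoeff h.natDegree (le_antisymm h1 h2).le)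
  intro v hv
  have heval := aux_gp_eval hu hr1 S k v
  have hdiff : (auxG S k r).eval ((v:F)) = c * (∏ x ∈ S, ((v:F) - x)) := by
    have h4 := congrArg (Polynomial.eval ((v:F))) hzero
    rw [hh, Polynomial.eval_sub, Polynomial.eval_mul, Polynomial.eval_C,
      Polynomial.eval_zero, sub_eq_zero, aux_fpoly_eval] at h4
    exact h4
  rw [hdiff] at heval
  have hPv : (∏ x ∈ S, ((v:F) - x)) ≠ 0 :=
    Finset.prod_ne_zero_iff.mpr fun x hx => sub_ne_zero.mpr (fun h' => hv (h' ▸ hx))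
  exact mul_right_cancel₀ hPv heval.symm

lemma aux_tc_vanish_of_const {r : ℕ} (hu : Fintype.card Fˣ = r) (hr1 : ((r : ℕ) : F) = -1)
    (S : Finset F) (hsr : S.card < r) (k : ℕ) (c : F)
    (hconst : ∀ v : Fˣ, (v:F) ∉ S → ((v:F))^k = c) :
    ∀ b, S.card < b → b < r → auxTC S k r b = 0 := by
  intro b hb hbr
  have hfd : (∏ x ∈ S, (X - C x) : F[X]).natDegree = S.card := aux_fpoly_natDegree S
  have hstep : ∀ u : Fˣ, (((u:F))^k * (∏ x ∈ S, ((u:F) - x)) * ((u:F))^(r-b))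
      = c * ((∏ x ∈ S, (X - C x) : F[X]).eval ((u:F)) * ((u:F))^(r-b)) := by
    intro u
    rw [aux_fpoly_eval]
    by_cases hus : (u:F) ∈ S
    · rw [Finset.prod_eq_zero hus (sub_self _)]; ring
    · rw [hconst u hus]; ring
  have key : auxTC S k r b
      = c * (-∑ u : Fˣ, (∏ x ∈ S, (X - C x) : F[X]).eval ((u:F)) * ((u:F))^(r-b)) := by
    rw [auxTC, Finset.sum_congr rfl (fun u _ => hstep u), ← Finset.mul_sum]
    ring
  rw [key, aux_coeff hu _ (by omega : (∏ x ∈ S, (X - C x) : F[X]).natDegree < r) hbr,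
    Polynomial.coeff_eq_zero_of_natDegree_lt (by omega), mul_zero]

end A3

section A4
variable {F : Type*} [Field F] [Fintype F] [DecidableEq F]

lemma aux_support_reduceMod {q n : ℕ} (Q : MvPolynomial (Fin n) F) {e : Fin n →₀ ℕ}
    (he : e ∈ (reduceMod q Q).support) :
    ∃ e' ∈ Q.support, reduceExp q e' = e := by
  rw [MvPolynomial.mem_support_iff] at he
  by_contra hno
  push_neg at hno
  apply he
  rw [reduceMod, MvPolynomial.coeff_sum]
  refine Finset.sum_eq_zero fun e' he' => ?_
  rw [MvPolynomial.coeff_monomial, if_neg (hno e' he')]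

lemma aux_exp_lt {q n : ℕ} (hq1 : 0 < q - 1) (Q : MvPolynomial (Fin n) F) {e : Fin n →₀ ℕ}
    (he : e ∈ (reduceMod q Q).support) : ∀ i, e i < q - 1 := by
  obtain ⟨e', _, rfl⟩ := aux_support_reduceMod Q he
  intro i
  rw [reduceExp, Finsupp.mapRange_apply]
  exact Nat.mod_lt _ hq1

lemma aux_eval_reduceMod {q n : ℕ} (hu : Fintype.card Fˣ = q - 1)
    (Q : MvPolynomial (Fin n) F) (a : Fin n → Fˣ) :
    MvPolynomial.eval (fun i => ((a i : F))) (reduceMod q Q)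
      = MvPolynomial.eval (fun i => ((a i : F))) Q := by
  have hpow : ∀ (i : Fin n) (d : ℕ), ((a i : F)) ^ (d % (q-1)) = ((a i : F)) ^ d := by
    intro i d
    conv_rhs => rw [← Nat.div_add_mod d (q-1)]
    rw [pow_add, pow_mul, aux_upow hu, one_pow, one_mul]
  rw [reduceMod, map_sum, MvPolynomial.eval_eq' (fun i => ((a i : F))) Q]
  refine Finset.sum_congr rfl fun e he => ?_
  rw [MvPolynomial.eval_monomial]
  congr 1
  rw [reduceExp, Finsupp.prod_mapRange_index (fun i => pow_zero _),
    Finsupp.prod_fintype e (fun i b => ((a i : F)) ^ (b % (q-1))) (fun i => pow_zero _)]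
  exact Finset.prod_congr rfl fun i _ => hpow i (e i)

lemma aux_mv_coeff {n r : ℕ} (hu : Fintype.card Fˣ = r) (Q : MvPolynomial (Fin n) F)
    (hQ : ∀ e ∈ Q.support, ∀ i, e i < r) (j : Fin n →₀ ℕ) (hj : ∀ i, j i < r) :
    ∑ a : Fin n → Fˣ, (MvPolynomial.eval (fun i => ((a i : F))) Q) * ∏ i, ((a i : F)) ^ (r - j i)
      = (-1)^n * Q.coeff j := by
  have step1 : ∀ a : Fin n → Fˣ,
      (MvPolynomial.eval (fun i => ((a i : F))) Q) * ∏ i, ((a i : F)) ^ (r - j i)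
      = ∑ e ∈ Q.support, Q.coeff e * ∏ i, ((a i : F)) ^ (e i + (r - j i)) := by
    intro a
    rw [MvPolynomial.eval_eq', Finset.sum_mul]
    refine Finset.sum_congr rfl fun e _ => ?_
    rw [mul_assoc, ← Finset.prod_mul_distrib]
    simp_rw [pow_add]
  rw [Finset.sum_congr rfl fun a _ => step1 a, Finset.sum_comm]
  have step2 : ∀ e ∈ Q.support,
      (∑ a : Fin n → Fˣ, Q.coeff e * ∏ i, ((a i : F)) ^ (e i + (r - j i)))
      = if e = j then Q.coeff e * (-1)^n else 0 := by
    intro e he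
    rw [← Finset.mul_sum,
      ← Fintype.prod_sum (fun i (u : Fˣ) => ((u : F)) ^ (e i + (r - j i)))]
    have horth : ∀ i : Fin n, (∑ u : Fˣ, ((u : F)) ^ (e i + (r - j i)))
        = if r ∣ (e i + (r - j i)) then (-1 : F) else 0 := fun i => aux_orth hu _
    by_cases hej : e = j
    · rw [if_pos hej]
      congr 1
      rw [Finset.prod_congr rfl fun i _ => horth i,
        Finset.prod_congr rfl fun i _ =>
          if_pos ((aux_dvd (hQ e he i) (hj i)).mpr (by rw [hej])),
        Finset.prod_const, Finset.card_univ, Fintype.card_fin]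
    · rw [if_neg hej]
      obtain ⟨i0, hi0⟩ : ∃ i0, e i0 ≠ j i0 := by
        by_contra hc; push_neg at hc
        exact hej (Finsupp.ext hc)
      refine mul_eq_zero_of_right _ ?_
      apply Finset.prod_eq_zero (Finset.mem_univ i0)
      rw [horth i0, if_neg (fun hd => hi0 ((aux_dvd (hQ e he i0) (hj i0)).mp hd))]
  rw [Finset.sum_congr rfl step2, Finset.sum_ite_eq' Q.support j (fun e => Q.coeff e * (-1)^n)]
  by_cases hjs : j ∈ Q.support
  · rw [if_pos hjs]; ring
  · rw [if_neg hjs, MvPolynomial.notMem_support_iff.mp hjs]; ring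

lemma aux_coeff_prod {q n : ℕ} (hu : Fintype.card Fˣ = q - 1) (hq1 : 0 < q - 1)
    (S : Fin n → Finset F) (k : Fin n →₀ ℕ)
    (j : Fin n →₀ ℕ) (hj : ∀ i, j i < q - 1) :
    (reduceMod q (MvPolynomial.monomial k (1:F) *
        ∏ i, ∏ x ∈ S i, (MvPolynomial.X i - MvPolynomial.C x))).coeff j
      = ∏ i, auxTC (S i) (k i) (q - 1) (j i) := by
  set Q := MvPolynomial.monomial k (1:F) *
      ∏ i, ∏ x ∈ S i, (MvPolynomial.X i - MvPolynomial.C x) with hQdef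
  have hQ' : ∀ e ∈ (reduceMod q Q).support, ∀ i, e i < q - 1 :=
    fun e he => aux_exp_lt hq1 Q he
  have hform := aux_mv_coeff hu (reduceMod q Q) hQ' j hj
  have heval : ∀ a : Fin n → Fˣ,
      (MvPolynomial.eval (fun i => ((a i : F))) (reduceMod q Q)) * ∏ i, ((a i : F)) ^ (q - 1 - j i)
      = ∏ i, (((a i : F)) ^ (k i) * (∏ x ∈ S i, ((a i : F) - x)) * ((a i : F)) ^ (q - 1 - j i)) := by
    intro a
    rw [aux_eval_reduceMod hu, hQdef, map_mul, MvPolynomial.eval_monomial, one_mul,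
      Finsupp.prod_fintype _ _ (fun i => pow_zero _), map_prod]
    have : ∀ i : Fin n,
        (MvPolynomial.eval (fun i => ((a i : F))) (∏ x ∈ S i, (MvPolynomial.X i - MvPolynomial.C x)))
        = ∏ x ∈ S i, ((a i : F) - x) := by
      intro i
      rw [map_prod]
      exact Finset.prod_congr rfl fun x _ => by simp
    rw [Finset.prod_congr rfl fun i _ => this i, ← Finset.prod_mul_distrib,
      ← Finset.prod_mul_distrib]
  rw [Finset.sum_congr rfl fun a _ => heval a,
    ← Fintype.prod_sum (fun i (u : Fˣ) =>
        ((u : F)) ^ (k i) * (∏ x ∈ S i, ((u : F) - x)) * ((u : F)) ^ (q - 1 - j i))] at hform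
  have hneg : ∀ i : Fin n,
      (∑ u : Fˣ, ((u : F)) ^ (k i) * (∏ x ∈ S i, ((u : F) - x)) * ((u : F)) ^ (q - 1 - j i))
      = -1 * auxTC (S i) (k i) (q - 1) (j i) := by
    intro i; rw [auxTC]; ring
  rw [Finset.prod_congr rfl fun i _ => hneg i, Finset.prod_mul_distrib,
    Finset.prod_const, Finset.card_univ, Fintype.card_fin] at hform
  have hne : ((-1 : F))^n ≠ 0 := pow_ne_zero _ (neg_ne_zero.mpr one_ne_zero)
  exact (mul_left_cancel₀ hne hform).symm

end A4


/-- **Theorem 4.** Let `S_i ⊆ F_q^*` with `0 < |S_i| < q-1`, not all `|S_i| = q-2`,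
`T_i = F_q^* \ S_i`, `t_i = |T_i|`, `m = ∏ t_i`, and
`P = ∏_{i=1}^n ∏_{x ∈ S_i} (X_i - x)`. There exists `(k_1,…,k_n)` with `0 < k_i < q-1`
such that the support of `X_1^{k_1} ⋯ X_n^{k_n} P mod {X_i^{q-1}-1}` is disjoint from
`U(q,m-1,n)` if and only if each `T_i` is contained in a coset `γ_i H_i` of a proper
multiplicative subgroup `H_i` of `F_q^*`. -/
theorem shifted_support_avoids_U_iff_complements_in_cosets
    {F : Type*} [Field F] [Fintype F] [DecidableEq F] {q n : ℕ}
    (hq : Fintype.card F = q) (hn : 0 < n)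
    (S : Fin n → Finset F) (hS0 : ∀ i, (0 : F) ∉ S i)
    (hScard : ∀ i, 0 < (S i).card ∧ (S i).card < q - 1)
    (hnotall : ¬ ∀ i, (S i).card = q - 2)
    (T : Fin n → Finset F) (hT : ∀ i, T i = Finset.univ.filter (· ≠ (0 : F)) \ S i)
    (t : Fin n → ℕ) (ht : ∀ i, t i = (T i).card)
    (m : ℕ) (hm : m = ∏ i, t i)
    (P : MvPolynomial (Fin n) F)
    (hP : P = ∏ i, ∏ x ∈ S i, (MvPolynomial.X i - MvPolynomial.C x)) :
    (∃ k : Fin n →₀ ℕ, (∀ i, 0 < k i ∧ k i < q - 1) ∧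
        ∀ e ∈ (reduceMod q (MvPolynomial.monomial k (1 : F) * P)).support,
          ¬ inU q (m - 1) e) ↔
      (∀ i, ∃ γ : Fˣ, ∃ H : Subgroup Fˣ, H ≠ ⊤ ∧
        ∀ x ∈ T i, ∃ h ∈ H, x = ((γ * h : Fˣ) : F)) := by
  obtain ⟨i0⟩ : Nonempty (Fin n) := ⟨⟨0, hn⟩⟩
  have hq2 : 2 ≤ q - 1 := by have := hScard i0; omega
  have hu : Fintype.card Fˣ = q - 1 := by rw [Fintype.card_units, hq]
  have hq1 : 0 < q - 1 := by omega
  have hr1 : (((q - 1 : ℕ)) : F) = -1 := by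
    have h0 : ((q : ℕ) : F) = 0 := by rw [← hq]; exact FiniteField.cast_card_eq_zero F
    have hcast : ((q - 1 : ℕ) : F) = (q : F) - 1 := by
      rw [Nat.cast_sub (by omega : 1 ≤ q)]; norm_num
    rw [hcast, h0]; ring
  have hTmem : ∀ i (x : F), x ∈ T i ↔ (x ≠ 0 ∧ x ∉ S i) := by
    intro i x
    rw [hT i, Finset.mem_sdiff, Finset.mem_filter]
    simp
  have hScards : ∀ i, (S i).card < q - 1 := fun i => (hScard i).2
  have htval : ∀ i, t i = (q - 1) - (S i).card := by
    intro i
    rw [ht i, hT i]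
    have hsub : S i ⊆ Finset.univ.filter (· ≠ (0:F)) := by
      intro x hx
      simp only [Finset.mem_filter, Finset.mem_univ, true_and]
      exact fun h => hS0 i (h ▸ hx)
    rw [Finset.card_sdiff_of_subset hsub]
    congr 1
    rw [Finset.filter_ne', Finset.card_erase_of_mem (Finset.mem_univ _), Finset.card_univ, hq]
  have ht1 : ∀ i, 1 ≤ t i := fun i => by have := hScards i; rw [htval i]; omega
  have hm1 : 1 ≤ m := by rw [hm]; exact Finset.one_le_prod' (fun i _ => ht1 i)
  constructor
  · rintro ⟨k, hk, hdisj⟩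
    intro i
    have hdnon : ∀ jj : Fin n, ((Finset.range (q-1)).filter
        (fun b => auxTC (S jj) (k jj) (q-1) b ≠ 0)).Nonempty := by
      intro jj
      obtain ⟨b, hb1, hb2⟩ := aux_tc_exists hu hr1 (S jj) (hS0 jj) (hScards jj) (k jj)
      exact ⟨b, Finset.mem_filter.mpr ⟨Finset.mem_range.mpr hb1, hb2⟩⟩
    set d : Fin n → ℕ := fun jj => (((Finset.range (q-1)).filter
        (fun b => auxTC (S jj) (k jj) (q-1) b ≠ 0))).max' (hdnon jj) with hd
    have hdmem : ∀ jj, d jj < q - 1 ∧ auxTC (S jj) (k jj) (q-1) (d jj) ≠ 0 := by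
      intro jj
      have h := Finset.max'_mem _ (hdnon jj)
      rw [Finset.mem_filter, Finset.mem_range] at h
      exact h
    have hdmax : ∀ jj b, b < q - 1 → auxTC (S jj) (k jj) (q-1) b ≠ 0 → b ≤ d jj := by
      intro jj b hb hbne
      exact Finset.le_max' _ b (Finset.mem_filter.mpr ⟨Finset.mem_range.mpr hb, hbne⟩)
    have hsd : ∀ jj, (S jj).card ≤ d jj := by
      intro jj
      have hgne : auxG (S jj) (k jj) (q-1) ≠ 0 := by
        intro h0
        apply (hdmem jj).2
        have h1 := congrArg (fun p => Polynomial.coeff p (d jj)) h0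
        simpa [aux_gp_coeff, (hdmem jj).1] using h1
      have h1 : (S jj).card ≤ (auxG (S jj) (k jj) (q-1)).natDegree :=
        aux_card_le hgne (S jj) (fun x hx => aux_gp_eval_S hu hr1 (S jj) (hS0 jj) (k jj) hx)
      have h2 : (auxG (S jj) (k jj) (q-1)).natDegree ≤ d jj := by
        apply Polynomial.natDegree_le_iff_coeff_eq_zero.mpr
        intro N hN
        rw [aux_gp_coeff]
        by_cases hNr : N < q - 1
        · rw [if_pos hNr]
          by_contra hne
          exact absurd (hdmax jj N hNr hne) (by omega)
        · rw [if_neg hNr]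
      omega
    have hvan : ∀ b, (S i).card < b → b < q - 1 → auxTC (S i) (k i) (q-1) b = 0 := by
      intro b hb hbr
      by_contra hbne
      set e : Fin n →₀ ℕ := Finsupp.equivFunOnFinite.symm (Function.update d i b) with he
      have heapp : ∀ jj, e jj = Function.update d i b jj := fun jj => rfl
      have helt : ∀ jj, e jj < q - 1 := by
        intro jj
        rw [heapp]
        by_cases hji : jj = i
        · subst hji; rw [Function.update_self]; exact hbr
        · rw [Function.update_of_ne hji]; exact (hdmem jj).1
      have hcoeff : (reduceMod q (MvPolynomial.monomial k (1 : F) * P)).coeff e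
          = ∏ jj, auxTC (S jj) (k jj) (q-1) (e jj) := by
        rw [hP]; exact aux_coeff_prod hu hq1 S k e helt
      have hprodne : (∏ jj, auxTC (S jj) (k jj) (q-1) (e jj)) ≠ 0 := by
        rw [Finset.prod_ne_zero_iff]
        intro jj _
        rw [heapp]
        by_cases hji : jj = i
        · subst hji; rw [Function.update_self]; exact hbne
        · rw [Function.update_of_ne hji]; exact (hdmem jj).2
      have hmem : e ∈ (reduceMod q (MvPolynomial.monomial k (1 : F) * P)).support := by
        rw [MvPolynomial.mem_support_iff, hcoeff]; exact hprodne
      apply hdisj e hmem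
      refine ⟨helt, ?_⟩
      have hbound : ∀ jj, q - 1 - e jj ≤ (if jj = i then t i - 1 else t jj) := by
        intro jj
        rw [heapp]
        by_cases hji : jj = i
        · subst hji; rw [if_pos rfl, Function.update_self, htval]; omega
        · rw [if_neg hji, Function.update_of_ne hji, htval]
          have := hsd jj
          have := hdmem jj
          omega
      calc ∏ s : Fin n, (q - 1 - e s) ≤ ∏ jj, (if jj = i then t i - 1 else t jj) :=
            Finset.prod_le_prod' (fun jj _ => hbound jj)
        _ ≤ m - 1 := by
            rw [← Finset.mul_prod_erase Finset.univ _ (Finset.mem_univ i), if_pos rfl]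
            have heq : (∏ jj ∈ Finset.univ.erase i, (if jj = i then t i - 1 else t jj))
                = ∏ jj ∈ Finset.univ.erase i, t jj := by
              refine Finset.prod_congr rfl fun jj hjj => ?_
              rw [if_neg (Finset.mem_erase.mp hjj).1]
            rw [heq]
            have hm' : m = t i * ∏ jj ∈ Finset.univ.erase i, t jj := by
              rw [hm, ← Finset.mul_prod_erase Finset.univ t (Finset.mem_univ i)]
            have hpos : 0 < ∏ jj ∈ Finset.univ.erase i, t jj :=
              Finset.prod_pos (fun jj _ => ht1 jj)
            have hti := ht1 i
            have hsplit : (t i - 1) * (∏ jj ∈ Finset.univ.erase i, t jj)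
                + (∏ jj ∈ Finset.univ.erase i, t jj) = m := by
              rw [hm']
              have : t i - 1 + 1 = t i := by omega
              nlinarith [this]
            omega
    have hconst := aux_rigid hu hr1 (S i) (hS0 i) (hScards i) (k i) hvan
    have hTcard : 0 < (T i).card := by
      have := ht1 i; rw [ht i] at this; omega
    obtain ⟨τ, hτ⟩ := Finset.card_pos.mp hTcard
    have hτ' := (hTmem i τ).mp hτ
    refine ⟨Units.mk0 τ hτ'.1, (powMonoidHom (k i) : Fˣ →* Fˣ).ker, ?_, ?_⟩
    · intro htop
      obtain ⟨ζ, hζ⟩ := IsCyclic.exists_generator (α := Fˣ)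
      have hζk : ζ ^ (k i) = 1 := by
        have hmem : ζ ∈ (powMonoidHom (k i) : Fˣ →* Fˣ).ker := htop ▸ Subgroup.mem_top ζ
        simpa [MonoidHom.mem_ker, powMonoidHom_apply] using hmem
      have hord : orderOf ζ = q - 1 := by
        rw [orderOf_eq_card_of_forall_mem_zpowers hζ, Nat.card_eq_fintype_card, hu]
      have hdvd : q - 1 ∣ k i := by rw [← hord]; exact orderOf_dvd_of_pow_eq_one hζk
      have h5 := Nat.le_of_dvd (hk i).1 hdvd
      have h6 := (hk i).2
      omega
    · intro x hx
      have hx' := (hTmem i x).mp hx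
      have h1 : ((Units.mk0 τ hτ'.1 : Fˣ) : F)^(k i) = auxTC (S i) (k i) (q-1) (S i).card := by
        apply hconst; simpa using hτ'.2
      have h2 : ((Units.mk0 x hx'.1 : Fˣ) : F)^(k i) = auxTC (S i) (k i) (q-1) (S i).card := by
        apply hconst; simpa using hx'.2
      have hc0 : auxTC (S i) (k i) (q-1) (S i).card ≠ 0 := by
        rw [← h1]; exact pow_ne_zero _ (Units.ne_zero _)
      refine ⟨(Units.mk0 τ hτ'.1)⁻¹ * (Units.mk0 x hx'.1), ?_, ?_⟩
      · rw [MonoidHom.mem_ker, powMonoidHom_apply]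
        apply Units.ext
        rw [Units.val_pow_eq_pow_val, Units.val_one, Units.val_mul,
          Units.val_inv_eq_inv_val, mul_pow, inv_pow, h1, h2]
        exact inv_mul_cancel₀ hc0
      · rw [mul_inv_cancel_left]
        simp
  · intro hcos
    have hchoice : ∀ i : Fin n, ∃ ki : ℕ, (0 < ki ∧ ki < q - 1) ∧
        ∃ c : F, ∀ v : Fˣ, (v : F) ∉ S i → ((v:F))^ki = c := by
      intro i
      obtain ⟨γ, H, hHne, hHcos⟩ := hcos i
      have hHfin : Nat.card H ∣ Nat.card Fˣ := Subgroup.card_subgroup_dvd_card H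
      have hcard : Nat.card Fˣ = q - 1 := by rw [Nat.card_eq_fintype_card, hu]
      refine ⟨Nat.card H, ⟨Nat.card_pos, ?_⟩, ((γ:F))^(Nat.card H), ?_⟩
      · have hle : Nat.card H ≤ q - 1 := Nat.le_of_dvd hq1 (hcard ▸ hHfin)
        have hne : Nat.card H ≠ q - 1 := by
          intro h
          exact hHne (Subgroup.eq_top_of_card_eq H (by rw [h, hcard]))
        omega
      · intro v hv
        have hvT : (v : F) ∈ T i := (hTmem i _).mpr ⟨Units.ne_zero v, hv⟩
        obtain ⟨h, hh, hvh⟩ := hHcos _ hvT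
        have hveq : v = γ * h := Units.ext hvh
        have hh1 : h ^ Nat.card H = 1 := by
          have hmem : (⟨h, hh⟩ : H) ^ Nat.card H = 1 := pow_card_eq_one'
          rw [Subtype.ext_iff] at hmem
          push_cast at hmem
          exact hmem
        have hhF : ((h:F)) ^ Nat.card H = 1 := by
          have := congrArg (fun z : Fˣ => (z:F)) hh1
          simpa using this
        rw [hveq, Units.val_mul, mul_pow, hhF, mul_one]
    choose kf hkf hkc using hchoice
    set k : Fin n →₀ ℕ := Finsupp.equivFunOnFinite.symm kf with hkdef
    have hkapp : ∀ i, k i = kf i := fun i => rfl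
    refine ⟨k, fun i => by rw [hkapp]; exact hkf i, ?_⟩
    intro e he
    have helt : ∀ i, e i < q - 1 := aux_exp_lt hq1 _ he
    have hcoeff : (reduceMod q (MvPolynomial.monomial k (1 : F) * P)).coeff e
        = ∏ jj, auxTC (S jj) (k jj) (q-1) (e jj) := by
      rw [hP]; exact aux_coeff_prod hu hq1 S k e helt
    have hne : (∏ jj, auxTC (S jj) (k jj) (q-1) (e jj)) ≠ 0 := by
      rw [← hcoeff]; exact MvPolynomial.mem_support_iff.mp he
    have hle : ∀ i, e i ≤ (S i).card := by
      intro i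
      by_contra hgt
      push_neg at hgt
      obtain ⟨c, hc⟩ := hkc i
      have hz := aux_tc_vanish_of_const hu hr1 (S i) (hScards i) (kf i) c hc (e i) hgt (helt i)
      exact (Finset.prod_ne_zero_iff.mp hne i (Finset.mem_univ i)) (by rw [hkapp]; exact hz)
    intro hU
    have hlow : ∀ i, t i ≤ q - 1 - e i := by
      intro i
      have h5 := hle i
      have h6 := hScards i
      rw [htval i]; omega
    have hmle : m ≤ ∏ s : Fin n, (q - 1 - e s) := by
      rw [hm]; exact Finset.prod_le_prod' (fun i _ => hlow i)
    have := hU.2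
    omega
end

section
/- Let q be a prime power, n a positive integer, and for i = 1, ..., n let S_i ⊆ F_q^* with 0 < |S_i| < q-1, not all |S_i| equal to q-2. Set T_i = F_q^* \ S_i, t_i = |T_i|, and m = \prod_{i=1}^n t_i. Let P(X_1,...,X_n) = \prod_{i=1}^n \prod_{x ∈ S_i}(X_i - x). If there exists (k_1, ..., k_n) with 0 < k_i < q-1 for all i such that the support of the reduction of X_1^{k_1} ··· X_n^{k_n} P modulo {X_1^{q-1} - 1, ..., X_n^{q-1} - 1} is disjoint from U(q, m-1, n), then for every i = 1, ..., n the set T_i is contained in the coset γ_i H_i, where H_i = { β ∈ F_q^* : β^{k_i} = 1 } is a proper multiplicative subgroup of F_q^* and γ_i is any element of T_i. -/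
/-! Write `P_S = ∏_{x ∈ S}(X - x)` and `P_T = ∏_{x ∈ T}(X - x)`, so that `P_S P_T = X^{q-1} - 1`.
The polynomial `X^k P` is a product of univariate factors `X_i^{k_i} P_{S_i}(X_i)`, and its
reduction is the product of their reductions modulo `X^{q-1} - 1`, namely `P_{S_i} w_i` with
`w_i = X^{k_i} mod P_{T_i}`. Hence the exponent `e_i = |S_i| + deg w_i` is in the support, and
`∏ (q - 1 - e_i) = ∏ (t_i - deg w_i)`. Since `e ∉ U(q, m-1, n)`, every `w_i` is a constant. As
`w_i` agrees with `x ↦ x^{k_i}` on `T_i`, all elements of `T_i` have the same `k_i`-th power. -/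

namespace Polynomial

section FoldExponents

variable {R : Type*} [CommRing R]

noncomputable def foldExponents (ρ : ℕ) (p : R[X]) : R[X] :=
  ∑ j ∈ p.support, monomial (j % ρ) (p.coeff j)

theorem X_pow_sub_one_dvd_sub_foldExponents (ρ : ℕ) (p : R[X]) :
    X ^ ρ - 1 ∣ p - foldExponents ρ p := by
  nth_rewrite 1 [p.as_sum_support]
  rw [foldExponents, ← Finset.sum_sub_distrib]
  refine Finset.dvd_sum fun j _ => ?_
  have hfold : monomial j (p.coeff j) - monomial (j % ρ) (p.coeff j) =
      monomial (j % ρ) (p.coeff j) * ((X ^ ρ) ^ (j / ρ) - 1) := by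
    rw [mul_sub, mul_one, ← pow_mul, X_pow_eq_monomial, monomial_mul_monomial, mul_one,
      Nat.mod_add_div]
  rw [hfold]
  exact dvd_mul_of_dvd_right (sub_one_dvd_pow_sub_one _ _) _

theorem foldExponents_eq_modByMonic [Nontrivial R] {ρ : ℕ} (hρ : 0 < ρ) (p : R[X]) :
    foldExponents ρ p = p %ₘ (X ^ ρ - 1) := by
  have hmonic : (X ^ ρ - 1 : R[X]).Monic := by simpa using monic_X_pow_sub_C (1 : R) hρ.ne'
  have hdeg : (foldExponents ρ p).degree < (X ^ ρ - 1 : R[X]).degree := by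
    rw [← C_1, degree_X_pow_sub_C hρ]
    refine (degree_sum_le _ _).trans_lt ((Finset.sup_lt_iff (WithBot.bot_lt_coe ρ)).2 fun j _ => ?_)
    exact (degree_monomial_le _ _).trans_lt (WithBot.coe_lt_coe.2 (Nat.mod_lt j hρ))
  rw [← (modByMonic_eq_self_iff hmonic).2 hdeg]
  exact (modByMonic_eq_of_dvd_sub hmonic (X_pow_sub_one_dvd_sub_foldExponents ρ p)).symm

end FoldExponents

theorem mul_modByMonic_mul {R : Type*} [CommRing R] {P Q : R[X]} (hP : P.Monic) (hQ : Q.Monic)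
    (g : R[X]) : (P * g) %ₘ (P * Q) = P * (g %ₘ Q) := by
  nontriviality R
  have hPQ : (P * Q).Monic := hP.mul hQ
  have hdvd : P * Q ∣ P * g - P * (g %ₘ Q) :=
    ⟨g /ₘ Q, by nth_rewrite 1 [← modByMonic_add_div g Q]; ring⟩
  rw [modByMonic_eq_of_dvd_sub hPQ hdvd, (modByMonic_eq_self_iff hPQ).2]
  rw [mul_comm P, mul_comm P, hP.degree_mul, hP.degree_mul]
  exact WithBot.add_lt_add_right (degree_ne_bot.2 hP.ne_zero) (degree_modByMonic_lt g hQ)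

section ProdXSubC

variable {R : Type*} [CommRing R] {T : Finset R}

theorem eval_modByMonic_prod_X_sub_C (g : R[X]) {α : R} (hα : α ∈ T) :
    (g %ₘ ∏ x ∈ T, (X - C x)).eval α = g.eval α := by
  simpa using aeval_modByMonic_eq_self_of_root (p := g) (x := α)
    (by simpa [eval_prod] using Finset.prod_eq_zero hα (sub_self α))

theorem eval_eq_of_natDegree_modByMonic_prod_X_sub_C_eq_zero {g : R[X]}
    (hg : (g %ₘ ∏ x ∈ T, (X - C x)).natDegree = 0) {α β : R} (hα : α ∈ T) (hβ : β ∈ T) :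
    g.eval α = g.eval β := by
  rw [← eval_modByMonic_prod_X_sub_C g hα, ← eval_modByMonic_prod_X_sub_C g hβ,
    eq_C_of_natDegree_eq_zero hg, eval_C, eval_C]

theorem natDegree_modByMonic_prod_X_sub_C_lt [Nontrivial R] (g : R[X]) (hT : T.Nonempty) :
    (g %ₘ ∏ x ∈ T, (X - C x)).natDegree < T.card := by
  have hdeg : (∏ x ∈ T, (X - C x)).natDegree = T.card := natDegree_finsetProd_X_sub_C_eq_card T id
  rw [← hdeg]
  refine natDegree_modByMonic_lt g (monic_prod_X_sub_C id T) fun h => ?_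
  rw [h, natDegree_one] at hdeg
  exact hT.card_pos.ne hdeg

theorem X_pow_modByMonic_prod_X_sub_C_ne_zero [IsDomain R] (k : ℕ) (hT0 : (0 : R) ∉ T)
    (hT : T.Nonempty) : X ^ k %ₘ ∏ x ∈ T, (X - C x) ≠ 0 := by
  obtain ⟨α, hα⟩ := hT
  intro h
  have := eval_modByMonic_prod_X_sub_C (X ^ k) hα
  rw [h, eval_zero, eval_pow, eval_X] at this
  exact hT0 (eq_zero_of_pow_eq_zero this.symm ▸ hα)

theorem coeff_prod_X_sub_C_mul_ne_zero [Nontrivial R] (S : Finset R) {w : R[X]} (hw : w ≠ 0) :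
    ((∏ x ∈ S, (X - C x)) * w).coeff (S.card + w.natDegree) ≠ 0 := by
  have hdeg : (∏ x ∈ S, (X - C x)).natDegree = S.card := natDegree_finsetProd_X_sub_C_eq_card S id
  have hmonic : (∏ x ∈ S, (X - C x)).Monic := monic_prod_X_sub_C id S
  rw [← hdeg, coeff_mul_degree_add_degree, hmonic.leadingCoeff, one_mul]
  exact leadingCoeff_ne_zero.2 hw

end ProdXSubC

end Polynomial

section FiniteField

open Polynomial Finset

variable {F : Type*} [Field F] [Fintype F] [DecidableEq F]

theorem prod_X_sub_C_nonzero :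
    ∏ x ∈ univ.filter (· ≠ (0 : F)), (X - C x) = X ^ (Fintype.card F - 1) - 1 := by
  have hρ : Fintype.card F - 1 ≠ 0 := by have := Fintype.one_lt_card (α := F); omega
  have hne : (X ^ (Fintype.card F - 1) - 1 : F[X]) ≠ 0 := by
    simpa using X_pow_sub_C_ne_zero (Nat.pos_of_ne_zero hρ) (1 : F)
  refine (eq_of_monic_of_dvd_of_natDegree_le (monic_prod_of_monic _ _ fun x _ => monic_X_sub_C x)
    (by simpa using monic_X_pow_sub_C (1 : F) hρ) ?_ ?_).symm
  · rw [prod_eq_multiset_prod, Multiset.prod_X_sub_C_dvd_iff_le_roots hne]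
    refine (Multiset.le_iff_subset (nodup _)).2 fun x hx => ?_
    rw [mem_roots hne, IsRoot, eval_sub, eval_pow, eval_X, eval_one,
      FiniteField.pow_card_sub_one_eq_one x (mem_filter.1 hx).2, sub_self]
  · rw [← C_1, natDegree_X_pow_sub_C, natDegree_finsetProd_X_sub_C_eq_card, filter_ne',
      card_erase_of_mem (mem_univ 0), card_univ]

theorem subset_filter_ne_zero {S : Finset F} (hS : (0 : F) ∉ S) :
    S ⊆ univ.filter (· ≠ (0 : F)) :=
  fun x hx => mem_filter.2 ⟨mem_univ x, fun h => hS (h ▸ hx)⟩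

theorem card_add_card_filter_ne_zero_sdiff {S : Finset F} (hS : (0 : F) ∉ S) :
    S.card + (univ.filter (· ≠ (0 : F)) \ S).card = Fintype.card F - 1 := by
  rw [add_comm, card_sdiff_add_card_eq_card (subset_filter_ne_zero hS), filter_ne',
    card_erase_of_mem (mem_univ 0), card_univ]

theorem filter_ne_zero_sdiff_nonempty {S : Finset F} (hS : (0 : F) ∉ S)
    (hcard : S.card < Fintype.card F - 1) : (univ.filter (· ≠ (0 : F)) \ S).Nonempty :=
  card_pos.1 (by have := card_add_card_filter_ne_zero_sdiff hS; omega)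

theorem foldExponents_X_pow_mul_prod_X_sub_C {S : Finset F} (hS : (0 : F) ∉ S) (k : ℕ) :
    foldExponents (Fintype.card F - 1) (X ^ k * ∏ x ∈ S, (X - C x)) =
      (∏ x ∈ S, (X - C x)) * (X ^ k %ₘ ∏ x ∈ univ.filter (· ≠ (0 : F)) \ S, (X - C x)) := by
  rw [foldExponents_eq_modByMonic (Nat.sub_pos_of_lt Fintype.one_lt_card), ← prod_X_sub_C_nonzero,
    ← prod_sdiff (subset_filter_ne_zero hS), mul_comm (X ^ k), mul_comm _ (∏ x ∈ S, _)]
  exact mul_modByMonic_mul (monic_prod_X_sub_C id _) (monic_prod_X_sub_C id _) _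

theorem coeff_foldExponents_X_pow_mul_prod_X_sub_C_ne_zero {S : Finset F} (hS : (0 : F) ∉ S)
    (hcard : S.card < Fintype.card F - 1) (k : ℕ) :
    (foldExponents (Fintype.card F - 1) (X ^ k * ∏ x ∈ S, (X - C x))).coeff
      (S.card + (X ^ k %ₘ ∏ x ∈ univ.filter (· ≠ (0 : F)) \ S, (X - C x)).natDegree) ≠ 0 := by
  have hT := filter_ne_zero_sdiff_nonempty hS hcard
  rw [foldExponents_X_pow_mul_prod_X_sub_C hS]
  exact coeff_prod_X_sub_C_mul_ne_zero S
    (X_pow_modByMonic_prod_X_sub_C_ne_zero k (by simp) hT)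

end FiniteField

namespace MvPolynomial

section ProdAevalX

variable {R σ : Type*} [CommSemiring R]

theorem prod_sum_monomial_single [Fintype σ] [DecidableEq σ] (s : σ → Finset ℕ) (e : σ → ℕ → ℕ)
    (c : σ → ℕ → R) :
    ∏ i, ∑ j ∈ s i, monomial (Finsupp.single i (e i j)) (c i j) =
      ∑ x ∈ Fintype.piFinset s,
        monomial (Finsupp.equivFunOnFinite.symm fun i => e i (x i)) (∏ i, c i (x i)) := by
  rw [Finset.prod_univ_sum]
  refine Finset.sum_congr rfl fun x _ => ?_
  rw [← monomial_sum_prod, Finsupp.equivFunOnFinite_symm_eq_sum]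

theorem aeval_X_eq_sum_monomial_single (i : σ) (p : Polynomial R) :
    Polynomial.aeval (X i) p = ∑ j ∈ p.support, monomial (Finsupp.single i j) (p.coeff j) := by
  nth_rewrite 1 [p.as_sum_support]
  simp [Polynomial.aeval_monomial, X_pow_eq_monomial, C_mul_monomial]

theorem coeff_prod_aeval_X [Fintype σ] (p : σ → Polynomial R) (d : σ →₀ ℕ) :
    coeff d (∏ i, Polynomial.aeval (X i) (p i)) = ∏ i, (p i).coeff (d i) := by
  classical
  simp_rw [aeval_X_eq_sum_monomial_single]
  rw [prod_sum_monomial_single (e := fun _ j => j), coeff_sum, Finset.sum_eq_single (⇑d)]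
  · rw [coeff_monomial, if_pos (Finsupp.equivFunOnFinite_symm_coe d)]
  · intro x _ hx
    rw [coeff_monomial, if_neg]
    rintro rfl
    exact hx rfl
  · intro hd
    obtain ⟨i, hi⟩ : ∃ i, d i ∉ (p i).support := by simpa [Fintype.mem_piFinset] using hd
    rw [coeff_monomial, if_pos (Finsupp.equivFunOnFinite_symm_coe d)]
    exact Finset.prod_eq_zero (Finset.mem_univ i) (Polynomial.notMem_support_iff.1 hi)

theorem monomial_one_mul_prod_aeval_X [Fintype σ] (k : σ →₀ ℕ) (p : σ → Polynomial R) :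
    (monomial k 1 : MvPolynomial σ R) * ∏ i, Polynomial.aeval (X i) (p i) =
      ∏ i, Polynomial.aeval (X i) (Polynomial.X ^ k i * p i) := by
  simp only [map_mul, map_pow, Polynomial.aeval_X, Finset.prod_mul_distrib]
  rw [monomial_eq, C_1, one_mul, Finsupp.prod_fintype _ _ fun _ => pow_zero _]

end ProdAevalX

section ReduceMod

variable {F : Type*} [Field F] {n : ℕ}

theorem reduceMod_eq_mapDomainLinearMap (q : ℕ) (Q : MvPolynomial (Fin n) F) :
    reduceMod q Q = AddMonoidAlgebra.mapDomainLinearMap F F (reduceExp q) Q := by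
  conv_rhs => rw [Q.as_sum]
  simp [reduceMod, ← single_eq_monomial]

theorem reduceMod_sum_monomial {ι : Type*} (q : ℕ) (s : Finset ι) (e : ι → Fin n →₀ ℕ)
    (a : ι → F) :
    reduceMod q (∑ x ∈ s, monomial (e x) (a x)) = ∑ x ∈ s, monomial (reduceExp q (e x)) (a x) := by
  simp [reduceMod_eq_mapDomainLinearMap, ← single_eq_monomial]

theorem reduceMod_prod_aeval_X (q : ℕ) (p : Fin n → Polynomial F) :
    reduceMod q (∏ i, Polynomial.aeval (X i) (p i)) =
      ∏ i, Polynomial.aeval (X i : MvPolynomial (Fin n) F) ((p i).foldExponents (q - 1)) := by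
  have hfold : ∀ i, Polynomial.aeval (X i : MvPolynomial (Fin n) F) ((p i).foldExponents (q - 1)) =
      ∑ j ∈ (p i).support, monomial (Finsupp.single i (j % (q - 1))) ((p i).coeff j) := by
    intro i
    simp [Polynomial.foldExponents, Polynomial.aeval_monomial, X_pow_eq_monomial, C_mul_monomial]
  simp_rw [hfold, aeval_X_eq_sum_monomial_single]
  rw [prod_sum_monomial_single (e := fun _ j => j), prod_sum_monomial_single,
    reduceMod_sum_monomial]
  refine Finset.sum_congr rfl fun x _ => ?_
  congr 2
  ext i
  simp [reduceExp]

end ReduceMod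

end MvPolynomial

theorem eq_zero_of_prod_le_prod_tsub {ι : Type*} {s : Finset ι} {t D : ι → ℕ}
    (hD : ∀ i ∈ s, D i < t i) (h : ∏ i ∈ s, t i ≤ ∏ i ∈ s, (t i - D i)) : ∀ i ∈ s, D i = 0 := by
  by_contra! ⟨i, hi, hDi⟩
  exact h.not_gt (Finset.prod_lt_prod (fun j hj => Nat.sub_pos_of_lt (hD j hj))
    (fun j _ => Nat.sub_le _ _) ⟨i, hi, Nat.sub_lt_self (Nat.pos_of_ne_zero hDi) (hD i hi).le⟩)

theorem setOf_pow_eq_one_ne_univ {G : Type*} [Group G] [IsCyclic G] [Finite G] {k : ℕ}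
    (hk0 : 0 < k) (hk : k < Nat.card G) : {β : G | β ^ k = 1} ≠ Set.univ := by
  intro h
  have hdvd : Monoid.exponent G ∣ k :=
    Monoid.exponent_dvd_of_forall_pow_eq_one fun β => show β ∈ {β : G | β ^ k = 1} from h ▸ trivial
  rw [IsCyclic.exponent_eq_card] at hdvd
  exact (Nat.le_of_dvd hk0 hdvd).not_gt hk

theorem exists_pow_eq_one_and_eq_mul_of_pow_eq {G : Type*} [CommGroup G] {k : ℕ} {γ x : G}
    (h : γ ^ k = x ^ k) : ∃ η : G, η ^ k = 1 ∧ x = γ * η :=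
  ⟨γ⁻¹ * x, by rw [mul_pow, inv_pow, h, inv_mul_cancel], (mul_inv_cancel_left γ x).symm⟩

open Polynomial Finset in
theorem complements_in_explicit_cosets_of_shifted_support_avoids_U_general
    {F : Type*} [Field F] [Fintype F] [DecidableEq F] {q n : ℕ}
    (hq : Fintype.card F = q)
    (S : Fin n → Finset F) (hS0 : ∀ i, (0 : F) ∉ S i)
    (hScard : ∀ i, 0 < (S i).card ∧ (S i).card < q - 1)
    (T : Fin n → Finset F) (hT : ∀ i, T i = Finset.univ.filter (· ≠ (0 : F)) \ S i)
    (t : Fin n → ℕ) (ht : ∀ i, t i = (T i).card)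
    (m : ℕ) (hm : m = ∏ i, t i)
    (P : MvPolynomial (Fin n) F)
    (hP : P = ∏ i, ∏ x ∈ S i, (MvPolynomial.X i - MvPolynomial.C x))
    (k : Fin n →₀ ℕ) (hk : ∀ i, 0 < k i ∧ k i < q - 1)
    (hdisj : ∀ e ∈ (reduceMod q (MvPolynomial.monomial k (1 : F) * P)).support,
      ¬ inU q (m - 1) e) :
    ∀ i, ({β : Fˣ | β ^ (k i) = 1} ≠ Set.univ) ∧
      ∀ γ : Fˣ, (γ : F) ∈ T i → ∀ x : Fˣ, (x : F) ∈ T i →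
        ∃ h : Fˣ, h ^ (k i) = 1 ∧ x = γ * h := by
  subst hq hm
  obtain rfl : t = fun i => (T i).card := funext ht
  obtain rfl : T = fun i => univ.filter (· ≠ (0 : F)) \ S i := funext hT
  set w := fun i => X ^ k i %ₘ ∏ x ∈ univ.filter (· ≠ (0 : F)) \ S i, (X - C x)
  let e : Fin n →₀ ℕ := Finsupp.equivFunOnFinite.symm fun i => (S i).card + (w i).natDegree
  have hP' : P = ∏ i, aeval (MvPolynomial.X i) (∏ x ∈ S i, (X - C x)) := by simp [hP]
  have hnotU := hdisj e <| by
    rw [hP', MvPolynomial.monomial_one_mul_prod_aeval_X, MvPolynomial.reduceMod_prod_aeval_X,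
      MvPolynomial.mem_support_iff, MvPolynomial.coeff_prod_aeval_X]
    exact prod_ne_zero_iff.2 fun i _ =>
      coeff_foldExponents_X_pow_mul_prod_X_sub_C_ne_zero (hS0 i) (hScard i).2 (k i)
  have hD i : (w i).natDegree < (univ.filter (· ≠ (0 : F)) \ S i).card :=
    natDegree_modByMonic_prod_X_sub_C_lt _ (filter_ne_zero_sdiff_nonempty (hS0 i) (hScard i).2)
  have hsub i : Fintype.card F - 1 - e i =
      (univ.filter (· ≠ (0 : F)) \ S i).card - (w i).natDegree ∧ e i < Fintype.card F - 1 := by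
    have := card_add_card_filter_ne_zero_sdiff (hS0 i)
    have := hD i
    change _ - ((S i).card + _) = _ ∧ (S i).card + _ < _
    omega
  simp only [inU, fun i => (hsub i).2, implies_true, true_and, not_le, fun i => (hsub i).1]
    at hnotU
  have hw_const i : (w i).natDegree = 0 :=
    eq_zero_of_prod_le_prod_tsub (fun i _ => hD i) (by omega) i (mem_univ i)
  refine fun i => ⟨setOf_pow_eq_one_ne_univ (hk i).1 ?_, fun γ hγ x hx =>
    exists_pow_eq_one_and_eq_mul_of_pow_eq (Units.ext ?_)⟩
  · rw [Nat.card_units, Nat.card_eq_fintype_card]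
    exact (hk i).2
  · simpa using eval_eq_of_natDegree_modByMonic_prod_X_sub_C_eq_zero (hw_const i) hγ hx

/-- **"Only if" part of Theorem 4 (explicit subgroups).** With notation as in Theorem 4,
if `(k_1,…,k_n)` with `0 < k_i < q-1` is such that the support of
`X_1^{k_1} ⋯ X_n^{k_n} P mod {X_i^{q-1}-1}` is disjoint from `U(q,m-1,n)`, then for each
`i` the set `H_i = {β ∈ F_q^* : β^{k_i} = 1}` is a proper multiplicative subgroup of
`F_q^*` and `T_i ⊆ γ_i H_i` for any `γ_i ∈ T_i`. -/
theorem complements_in_explicit_cosets_of_shifted_support_avoids_U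
    {F : Type*} [Field F] [Fintype F] [DecidableEq F] {q n : ℕ}
    (hq : Fintype.card F = q) (hn : 0 < n)
    (S : Fin n → Finset F) (hS0 : ∀ i, (0 : F) ∉ S i)
    (hScard : ∀ i, 0 < (S i).card ∧ (S i).card < q - 1)
    (hnotall : ¬ ∀ i, (S i).card = q - 2)
    (T : Fin n → Finset F) (hT : ∀ i, T i = Finset.univ.filter (· ≠ (0 : F)) \ S i)
    (t : Fin n → ℕ) (ht : ∀ i, t i = (T i).card)
    (m : ℕ) (hm : m = ∏ i, t i)
    (P : MvPolynomial (Fin n) F)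
    (hP : P = ∏ i, ∏ x ∈ S i, (MvPolynomial.X i - MvPolynomial.C x))
    (k : Fin n →₀ ℕ) (hk : ∀ i, 0 < k i ∧ k i < q - 1)
    (hdisj : ∀ e ∈ (reduceMod q (MvPolynomial.monomial k (1 : F) * P)).support,
      ¬ inU q (m - 1) e) :
    ∀ i, ({β : Fˣ | β ^ (k i) = 1} ≠ Set.univ) ∧
      ∀ γ : Fˣ, (γ : F) ∈ T i → ∀ x : Fˣ, (x : F) ∈ T i →
        ∃ h : Fˣ, h ^ (k i) = 1 ∧ x = γ * h :=
  complements_in_explicit_cosets_of_shifted_support_avoids_U_general hq S hS0 hScard T hT t ht m hm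
    P hP k hk hdisj
end

section
/- Let q be a prime power, n a positive integer, and for i = 1, ..., n let S_i ⊆ F_q^* with 0 < |S_i| < q-1, not all |S_i| equal to q-2. Set T_i = F_q^* \ S_i, t_i = |T_i|, and m = \prod_{i=1}^n t_i. Let P(X_1,...,X_n) = \prod_{i=1}^n \prod_{x ∈ S_i}(X_i - x). Suppose that for every i the set T_i is contained in a coset γ_i H_i of a proper multiplicative subgroup H_i of F_q^* of order d_i. Then for every (k_1, ..., k_n) with each k_i a positive multiple of d_i and 0 < k_i < q-1, the support of the reduction of X_1^{k_1} ··· X_n^{k_n} P modulo {X_1^{q-1} - 1, ..., X_n^{q-1} - 1} is disjoint from U(q, m-1, n). -/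
/-!
On the torus `(Fˣ)ⁿ` the polynomial `P` vanishes unless every `xᵢ` lies in `Tᵢ ⊆ γᵢ Hᵢ`, and there
`xᵢ ^ kᵢ = γᵢ ^ kᵢ` because `dᵢ ∣ kᵢ`. So `X^k P` and `(∏ γᵢ ^ kᵢ) • P` agree as functions on the
torus. By orthogonality of the characters of `(Fˣ)ⁿ`, each coefficient of the reduction modulo the
`Xᵢ ^ (q-1) - 1` is determined by these values, so the reduction of `X^k P` is a nonzero multiple of
`P`, which is already reduced. A monomial `X^e` of `P` has `eᵢ ≤ |Sᵢ|`, whence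
`∏ (q - 1 - eᵢ) ≥ ∏ tᵢ = m`.
-/

open MvPolynomial Finset

lemma Nat.dvd_add_sub_iff_mod_eq {m a e : ℕ} (he : e < m) : m ∣ a + (m - e) ↔ a % m = e := by
  have hzero : e + (m - e) ≡ 0 [MOD m] := by
    rw [Nat.add_sub_cancel' he.le]; exact Nat.mod_self m
  rw [← Nat.modEq_zero_iff_dvd]
  constructor
  · intro h
    rw [← Nat.mod_eq_of_lt he]
    exact Nat.ModEq.add_right_cancel' _ (h.trans hzero.symm)
  · intro h
    have h' : a ≡ e [MOD m] := by rwa [Nat.ModEq, Nat.mod_eq_of_lt he]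
    exact (h'.add_right _).trans hzero

lemma mul_pow_eq_pow_of_mem_of_natCard_dvd {G : Type*} [CommGroup G] {H : Subgroup G} {h : G}
    (hh : h ∈ H) (g : G) {k : ℕ} (hk : Nat.card H ∣ k) : (g * h) ^ k = g ^ k := by
  rw [mul_pow, orderOf_dvd_iff_pow_eq_one.mp ((H.orderOf_dvd_natCard hh).trans hk), mul_one]

lemma sum_torus_prod_pow {F : Type*} [Field F] [Fintype F] [DecidableEq F]
    {σ : Type*} [Fintype σ] [DecidableEq σ] (b : σ → ℕ) :
    ∑ x : σ → Fˣ, ∏ i, (x i : F) ^ b i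
      = if ∀ i, Fintype.card F - 1 ∣ b i then (-1) ^ Fintype.card σ else 0 := by
  rw [← Fintype.prod_sum (fun i (u : Fˣ) => (u : F) ^ b i)]
  simp only [FiniteField.sum_pow_units, Fintype.prod_ite_zero, prod_const, card_univ]

section Reduction

variable {F : Type*} [Field F] {n : ℕ}

lemma coeff_reduceMod (q : ℕ) (Q : MvPolynomial (Fin n) F) (e : Fin n →₀ ℕ) :
    (reduceMod q Q).coeff e = ∑ a ∈ Q.support, if reduceExp q a = e then Q.coeff a else 0 := by
  classical
  simp only [reduceMod, coeff_sum, coeff_monomial]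

lemma reduceMod_eq_self {q : ℕ} {Q : MvPolynomial (Fin n) F} (hQ : ∀ i, degreeOf i Q < q - 1) :
    reduceMod q Q = Q := by
  conv_rhs => rw [Q.as_sum]
  refine sum_congr rfl fun a ha => ?_
  congr
  ext i
  exact Nat.mod_eq_of_lt ((monomial_le_degreeOf i ha).trans_lt (hQ i))

variable [Fintype F] [DecidableEq F]

lemma sum_torus_eval_mul_prod_pow (Q : MvPolynomial (Fin n) F) {e : Fin n →₀ ℕ}
    (he : ∀ i, e i < Fintype.card F - 1) :
    ∑ x : Fin n → Fˣ, eval (fun i => (x i : F)) Q * ∏ i, (x i : F) ^ (Fintype.card F - 1 - e i)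
      = (-1) ^ n * (reduceMod (Fintype.card F) Q).coeff e := by
  have hchar : ∀ a : Fin n →₀ ℕ,
      (∀ i, Fintype.card F - 1 ∣ a i + (Fintype.card F - 1 - e i)) ↔
        reduceExp (Fintype.card F) a = e := fun a => by
    simp only [Nat.dvd_add_sub_iff_mod_eq (he _), Finsupp.ext_iff, reduceExp,
      Finsupp.mapRange_apply]
  calc ∑ x : Fin n → Fˣ, eval (fun i => (x i : F)) Q * ∏ i, (x i : F) ^ (Fintype.card F - 1 - e i)
      = ∑ a ∈ Q.support, Q.coeff a *
          ∑ x : Fin n → Fˣ, ∏ i, (x i : F) ^ (a i + (Fintype.card F - 1 - e i)) := by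
        simp only [eval_eq', sum_mul, mul_sum, pow_add, prod_mul_distrib, mul_assoc]
        exact sum_comm
    _ = (-1) ^ n * (reduceMod (Fintype.card F) Q).coeff e := by
        simp only [sum_torus_prod_pow, hchar, coeff_reduceMod, mul_sum, Fintype.card_fin]
        refine sum_congr rfl fun a _ => ?_
        split_ifs <;> ring

lemma coeff_reduceMod_eq_mul_of_eval_eq {Q R : MvPolynomial (Fin n) F} {c : F}
    (hQR : ∀ x : Fin n → Fˣ, eval (fun i => (x i : F)) Q = c * eval (fun i => (x i : F)) R)
    {e : Fin n →₀ ℕ} (he : ∀ i, e i < Fintype.card F - 1) :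
    (reduceMod (Fintype.card F) Q).coeff e = c * (reduceMod (Fintype.card F) R).coeff e := by
  refine mul_left_cancel₀ (pow_ne_zero n (neg_ne_zero.mpr one_ne_zero) : ((-1 : F) ^ n) ≠ 0) ?_
  rw [← sum_torus_eval_mul_prod_pow Q he, mul_left_comm, ← sum_torus_eval_mul_prod_pow R he,
    mul_sum]
  simp only [hQR, mul_assoc]

end Reduction

section ProdXSubC

variable {F : Type*} [Field F] {σ : Type*} [Fintype σ]

lemma degreeOf_prod_X_sub_C_le [DecidableEq σ] (S : σ → Finset F) (i : σ) :
    degreeOf i (∏ j, ∏ s ∈ S j, (X j - C s)) ≤ #(S i) := by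
  calc degreeOf i (∏ j, ∏ s ∈ S j, (X j - C s))
      ≤ ∑ j, ∑ s ∈ S j, degreeOf i (X j - C s : MvPolynomial σ F) :=
        (degreeOf_prod_le _ _ _).trans (sum_le_sum fun j _ => degreeOf_prod_le _ _ _)
    _ ≤ ∑ j, ∑ _s ∈ S j, if i = j then 1 else 0 := by
        refine sum_le_sum fun j _ => sum_le_sum fun s _ => ?_
        refine (degreeOf_sub_le _ _ _).trans ?_
        simp [degreeOf_X, degreeOf_C]
    _ = #(S i) := by simp

lemma eval_monomial_mul_prod_X_sub_C (S : σ → Finset F) (k : σ →₀ ℕ) {g : σ → F}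
    (hg : ∀ i (y : Fˣ), (y : F) ∉ S i → (y : F) ^ k i = g i) (x : σ → Fˣ) :
    eval (fun i => (x i : F)) (monomial k 1 * ∏ j, ∏ s ∈ S j, (X j - C s))
      = (∏ i, g i) * eval (fun i => (x i : F)) (∏ j, ∏ s ∈ S j, (X j - C s)) := by
  by_cases hx : ∃ i, (x i : F) ∈ S i
  · obtain ⟨i, hi⟩ := hx
    have hzero : eval (fun i => (x i : F)) (∏ j, ∏ s ∈ S j, (X j - C s)) = 0 := by
      simp only [map_prod, map_sub, eval_X, eval_C]
      exact prod_eq_zero (mem_univ i) (prod_eq_zero hi (sub_self _))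
    rw [map_mul, hzero, mul_zero, mul_zero]
  · simp only [not_exists] at hx
    rw [map_mul, eval_monomial, Finsupp.prod_pow, one_mul]
    exact congrArg (· * _) (prod_congr rfl fun i _ => hg i (x i) (hx i))

end ProdXSubC

theorem shifted_support_avoids_U_of_complements_in_cosets_general
    {F : Type*} [Field F] [Fintype F] [DecidableEq F] {q n : ℕ}
    (hq : Fintype.card F = q)
    (S : Fin n → Finset F) (hS0 : ∀ i, (0 : F) ∉ S i)
    (hScard : ∀ i, 0 < (S i).card ∧ (S i).card < q - 1)
    (T : Fin n → Finset F) (hT : ∀ i, T i = Finset.univ.filter (· ≠ (0 : F)) \ S i)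
    (t : Fin n → ℕ) (ht : ∀ i, t i = (T i).card)
    (m : ℕ) (hm : m = ∏ i, t i)
    (P : MvPolynomial (Fin n) F)
    (hP : P = ∏ i, ∏ x ∈ S i, (MvPolynomial.X i - MvPolynomial.C x))
    (H : Fin n → Subgroup Fˣ)
    (d : Fin n → ℕ) (hd : ∀ i, Nat.card (H i) = d i)
    (γ : Fin n → Fˣ)
    (hsub : ∀ i, ∀ x ∈ T i, ∃ h ∈ H i, x = ((γ i * h : Fˣ) : F)) :
    ∀ k : Fin n →₀ ℕ, (∀ i, 0 < k i ∧ k i < q - 1 ∧ d i ∣ k i) →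
      ∀ e ∈ (reduceMod q (MvPolynomial.monomial k (1 : F) * P)).support,
        ¬ inU q (m - 1) e := by
  subst hq hP
  rintro k hk e he ⟨heU, hprod⟩
  have hpow : ∀ i (y : Fˣ), (y : F) ∉ S i → (y : F) ^ k i = ((γ i ^ k i : Fˣ) : F) := by
    intro i y hy
    obtain ⟨h, hh, hyh⟩ := hsub i y (by simp [hT, hy])
    rw [Units.ext hyh, ← Units.val_pow_eq_pow_val,
      mul_pow_eq_pow_of_mem_of_natCard_dvd hh _ (hd i ▸ (hk i).2.2)]
  have hdeg := degreeOf_prod_X_sub_C_le S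
  have hPe : (∏ i, ∏ x ∈ S i, (X i - C x)).coeff e ≠ 0 := by
    rw [mem_support_iff, coeff_reduceMod_eq_mul_of_eval_eq
      (eval_monomial_mul_prod_X_sub_C S k hpow) heU,
      reduceMod_eq_self fun i => (hdeg i).trans_lt (hScard i).2] at he
    exact right_ne_zero_of_mul he
  have hti : ∀ i, t i = Fintype.card F - 1 - #(S i) := fun i => by
    rw [ht, hT, card_sdiff_of_subset fun x hx => by simpa using ne_of_mem_of_not_mem hx (hS0 i),
      filter_ne', card_erase_of_mem (mem_univ _), card_univ]
  have hle : m ≤ ∏ s, (Fintype.card F - 1 - e s) := hm ▸ prod_le_prod' fun i _ =>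
    hti i ▸ Nat.sub_le_sub_left
      ((monomial_le_degreeOf i (mem_support_iff.mpr hPe)).trans (hdeg i)) _
  have hm0 : m ≠ 0 := hm ▸ prod_ne_zero_iff.mpr fun i _ => by
    rw [hti i]; have := (hScard i).2; omega
  omega

/-- **"If" part of Theorem 4.** With notation as in Theorem 4, suppose each `T_i` is
contained in a coset `γ_i H_i` of a proper multiplicative subgroup `H_i ≤ F_q^*` of order
`d_i`. Then for every `(k_1,…,k_n)` with each `k_i` a positive multiple of `d_i` and
`0 < k_i < q-1`, the support of `X_1^{k_1} ⋯ X_n^{k_n} P mod {X_i^{q-1}-1}` is disjoint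
from `U(q,m-1,n)`. -/
theorem shifted_support_avoids_U_of_complements_in_cosets
    {F : Type*} [Field F] [Fintype F] [DecidableEq F] {q n : ℕ}
    (hq : Fintype.card F = q) (hn : 0 < n)
    (S : Fin n → Finset F) (hS0 : ∀ i, (0 : F) ∉ S i)
    (hScard : ∀ i, 0 < (S i).card ∧ (S i).card < q - 1)
    (hnotall : ¬ ∀ i, (S i).card = q - 2)
    (T : Fin n → Finset F) (hT : ∀ i, T i = Finset.univ.filter (· ≠ (0 : F)) \ S i)
    (t : Fin n → ℕ) (ht : ∀ i, t i = (T i).card)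
    (m : ℕ) (hm : m = ∏ i, t i)
    (P : MvPolynomial (Fin n) F)
    (hP : P = ∏ i, ∏ x ∈ S i, (MvPolynomial.X i - MvPolynomial.C x))
    (H : Fin n → Subgroup Fˣ) (hHproper : ∀ i, H i ≠ ⊤)
    (d : Fin n → ℕ) (hd : ∀ i, Nat.card (H i) = d i)
    (γ : Fin n → Fˣ)
    (hsub : ∀ i, ∀ x ∈ T i, ∃ h ∈ H i, x = ((γ i * h : Fˣ) : F)) :
    ∀ k : Fin n →₀ ℕ, (∀ i, 0 < k i ∧ k i < q - 1 ∧ d i ∣ k i) →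
      ∀ e ∈ (reduceMod q (MvPolynomial.monomial k (1 : F) * P)).support,
        ¬ inU q (m - 1) e :=
  shifted_support_avoids_U_of_complements_in_cosets_general hq S hS0 hScard T hT t ht m hm P hP H d
    hd γ hsub
end

section
/- Let q be a prime power, n a positive integer, and for i = 1, ..., n let S_i ⊆ F_q^* with 0 < |S_i| < q-1, not all |S_i| equal to q-2. Set T_i = F_q^* \ S_i, t_i = |T_i|, and m = \prod_{i=1}^n t_i. Let P(X_1,...,X_n) = \prod_{i=1}^n \prod_{x ∈ S_i}(X_i - x). Then the support of P is disjoint from U(q, m-1, n); that is, every monomial X_1^{i_1} ··· X_n^{i_n} occurring in P with nonzero coefficient satisfies \prod_{s=1}^n (q-1-i_s) ≥ m. -/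
namespace MvPolynomial

variable {R σ : Type*} [CommRing R] [DecidableEq σ]

theorem degreeOf_X_le (i j : σ) :
    degreeOf i (X j : MvPolynomial σ R) ≤ if i = j then 1 else 0 := by
  rw [degreeOf_def, ← Multiset.count_singleton]
  exact Multiset.count_le_of_le i (degrees_X' j)

theorem degreeOf_X_sub_C_le (i j : σ) (x : R) :
    degreeOf i (X j - C x : MvPolynomial σ R) ≤ if i = j then 1 else 0 := by
  refine (degreeOf_sub_le i _ _).trans ?_
  rw [degreeOf_C, max_eq_left (Nat.zero_le _)]
  exact degreeOf_X_le i j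

theorem degreeOf_prod_X_sub_C_le (i j : σ) (s : Finset R) :
    degreeOf i (∏ x ∈ s, (X j - C x) : MvPolynomial σ R) ≤ if i = j then s.card else 0 :=
  calc degreeOf i (∏ x ∈ s, (X j - C x) : MvPolynomial σ R)
      ≤ ∑ x ∈ s, degreeOf i (X j - C x : MvPolynomial σ R) := degreeOf_prod_le i _ _
    _ ≤ ∑ _x ∈ s, if i = j then 1 else 0 :=
        Finset.sum_le_sum fun x _ => degreeOf_X_sub_C_le i j x
    _ = if i = j then s.card else 0 := by split_ifs <;> simp

theorem degreeOf_prod_prod_X_sub_C_le [Fintype σ] (S : σ → Finset R) (i : σ) :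
    degreeOf i (∏ j, ∏ x ∈ S j, (X j - C x) : MvPolynomial σ R) ≤ (S i).card :=
  calc degreeOf i (∏ j, ∏ x ∈ S j, (X j - C x) : MvPolynomial σ R)
      ≤ ∑ j, degreeOf i (∏ x ∈ S j, (X j - C x) : MvPolynomial σ R) := degreeOf_prod_le i _ _
    _ ≤ ∑ j, if i = j then (S i).card else 0 :=
        Finset.sum_le_sum fun j _ => (degreeOf_prod_X_sub_C_le i j (S j)).trans_eq <| by
          split_ifs with h <;> simp [h]
    _ = (S i).card := by simp

end MvPolynomial

theorem Finset.card_filter_ne_zero_sdiff {M : Type*} [Zero M] [Fintype M] [DecidableEq M]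
    {s : Finset M} (hs : (0 : M) ∉ s) :
    (univ.filter (· ≠ (0 : M)) \ s).card = Fintype.card M - 1 - s.card := by
  have hsub : s ⊆ univ.filter (· ≠ (0 : M)) := fun x hx => by
    simp only [mem_filter, mem_univ, true_and]
    rintro rfl
    exact hs hx
  rw [card_sdiff_of_subset hsub, filter_ne', card_erase_of_mem (mem_univ _), card_univ]

theorem support_avoids_U_general
    {F : Type*} [Field F] [Fintype F] [DecidableEq F] {q n : ℕ}
    (hq : Fintype.card F = q)
    (S : Fin n → Finset F) (hS0 : ∀ i, (0 : F) ∉ S i)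
    (hScard : ∀ i, 0 < (S i).card ∧ (S i).card < q - 1)
    (T : Fin n → Finset F) (hT : ∀ i, T i = Finset.univ.filter (· ≠ (0 : F)) \ S i)
    (t : Fin n → ℕ) (ht : ∀ i, t i = (T i).card)
    (m : ℕ) (hm : m = ∏ i, t i)
    (P : MvPolynomial (Fin n) F)
    (hP : P = ∏ i, ∏ x ∈ S i, (MvPolynomial.X i - MvPolynomial.C x)) :
    ∀ e ∈ P.support, ¬ inU q (m - 1) e ∧ m ≤ ∏ s : Fin n, (q - 1 - e s) := by
  intro e he
  have ht_eq : ∀ i, t i = q - 1 - (S i).card := fun i => by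
    rw [ht, hT, Finset.card_filter_ne_zero_sdiff (hS0 i), hq]
  have he_le : ∀ i, e i ≤ (S i).card := fun i =>
    (MvPolynomial.monomial_le_degreeOf i he).trans
      (hP ▸ MvPolynomial.degreeOf_prod_prod_X_sub_C_le S i)
  have hm_le : m ≤ ∏ s : Fin n, (q - 1 - e s) := hm ▸ Finset.prod_le_prod' fun i _ =>
    (ht_eq i).trans_le (Nat.sub_le_sub_left (he_le i) _)
  have hm_pos : 0 < m := by
    rw [hm]
    exact Finset.prod_pos fun i _ => by
      rw [ht_eq i]
      exact Nat.sub_pos_of_lt (hScard i).2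
  exact ⟨fun hU => by have := hU.2; omega, hm_le⟩

/-- **Support of `P` avoids `U(q,m-1,n)`.** Let `S_i ⊆ F_q^*` with `0 < |S_i| < q-1`, not
all `|S_i| = q-2`, `T_i = F_q^* \ S_i`, `t_i = |T_i|`, `m = ∏ t_i`, and
`P = ∏_{i=1}^n ∏_{x ∈ S_i}(X_i - x)`. Then the support of `P` is disjoint from
`U(q,m-1,n)`; that is, every monomial `X_1^{e_1} ⋯ X_n^{e_n}` occurring in `P` with
nonzero coefficient satisfies `∏_{s=1}^n (q-1-e_s) ≥ m`. -/
theorem support_avoids_U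
    {F : Type*} [Field F] [Fintype F] [DecidableEq F] {q n : ℕ}
    (hq : Fintype.card F = q) (hn : 0 < n)
    (S : Fin n → Finset F) (hS0 : ∀ i, (0 : F) ∉ S i)
    (hScard : ∀ i, 0 < (S i).card ∧ (S i).card < q - 1)
    (hnotall : ¬ ∀ i, (S i).card = q - 2)
    (T : Fin n → Finset F) (hT : ∀ i, T i = Finset.univ.filter (· ≠ (0 : F)) \ S i)
    (t : Fin n → ℕ) (ht : ∀ i, t i = (T i).card)
    (m : ℕ) (hm : m = ∏ i, t i)
    (P : MvPolynomial (Fin n) F)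
    (hP : P = ∏ i, ∏ x ∈ S i, (MvPolynomial.X i - MvPolynomial.C x)) :
    ∀ e ∈ P.support, ¬ inU q (m - 1) e ∧ m ≤ ∏ s : Fin n, (q - 1 - e s) :=
  support_avoids_U_general hq S hS0 hScard T hT t ht m hm P hP
end

section
/- Let q be a prime power, n a positive integer, and for i = 1, ..., n let T_i ⊆ F_q^* be a nonempty set contained in a coset γ_i H_i of a multiplicative subgroup H_i of F_q^* of order d_i, and let S_i = F_q^* \ T_i with t_i = |T_i| ≤ d_i. Set P(X_1,...,X_n) = \prod_{i=1}^n \prod_{x ∈ S_i}(X_i - x). Then every monomial X_1^{v_1} ··· X_n^{v_n} occurring in P with nonzero coefficient satisfies, for each i = 1, ..., n, that v_i ∈ { j d_i, j d_i + 1, ..., j d_i + (d_i - t_i) } for some j ∈ {0, 1, ..., (q-1)/d_i - 1}. -/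
/-!
Write `∏_{x ∈ S_i} (X - x) = A · B`, where `A` runs over `F^*` minus the coset `γ_i H_i` and `B`
over `γ_i H_i \ T_i`. The index set of `A` is a union of `H_i`-cosets, so `A(ζ X) = A(X)` for a
generator `ζ` of `H_i`; comparing coefficients, every exponent of `A` is divisible by
`d_i = ord ζ`, and it is at most `deg A = q - 1 - d_i`. The exponents of `B` are at most
`d_i - t_i`. Since the `i`-th factor of `P` is the only one involving `X_i`, the exponent of `X_i`
in any monomial of `P` is an exponent of `A · B`.
-/

open Finset Polynomial
open scoped Pointwise

namespace Polynomial

variable {R : Type*}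

theorem support_mul_subset [Semiring R] (p q : R[X]) :
    (p * q).support ⊆ p.support + q.support := by
  rw [← support_toFinsupp, toFinsupp_mul]
  exact AddMonoidAlgebra.support_coeff_mul_subset _ _

theorem le_card_of_mem_support_prod_X_sub_C [CommRing R] [Nontrivial R] {s : Finset R} {k : ℕ}
    (hk : k ∈ (∏ x ∈ s, (X - C x)).support) : k ≤ #s :=
  natDegree_finsetProd_X_sub_C_eq_card s id ▸ le_natDegree_of_mem_supp k hk

variable {F : Type*} [Field F]

theorem prod_X_sub_C_comp_C_mul_X {s : Finset F} {c : F} (hc : c ≠ 0)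
    (hs : ∀ x, c * x ∈ s ↔ x ∈ s) :
    (∏ x ∈ s, (X - C x)).comp (C c * X) = C (c ^ #s) * ∏ x ∈ s, (X - C x) := by
  have hscale : ∏ x ∈ s, (C c * X - C x) = ∏ x ∈ s, (C c * X - C (c * x)) :=
    prod_nbij' (c⁻¹ * ·) (c * ·) (fun x hx => (hs _).1 (by rwa [mul_inv_cancel_left₀ hc]))
      (fun x hx => (hs x).2 hx) (fun x _ => mul_inv_cancel_left₀ hc x)
      (fun x _ => inv_mul_cancel_left₀ hc x) (fun x _ => by rw [mul_inv_cancel_left₀ hc])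
  simp only [prod_comp, sub_comp, X_comp, C_comp, hscale, C_mul, ← mul_sub, prod_mul_distrib,
    prod_const, C_pow]

theorem pow_eq_pow_card_of_mem_support_prod_X_sub_C {s : Finset F} {c : F} (hc : c ≠ 0)
    (hs : ∀ x, c * x ∈ s ↔ x ∈ s) {k : ℕ} (hk : k ∈ (∏ x ∈ s, (X - C x)).support) :
    c ^ k = c ^ #s := by
  have hcoeff := congrArg (coeff · k) (prod_X_sub_C_comp_C_mul_X hc hs)
  simp only [comp_C_mul_X_coeff, coeff_C_mul] at hcoeff
  exact mul_left_cancel₀ (mem_support_iff.1 hk) (hcoeff.trans (mul_comm _ _))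

theorem modEq_card_of_mem_support_prod_X_sub_C {H : Subgroup Fˣ} [Finite H] {s : Finset F}
    (hs : ∀ u ∈ H, ∀ x, (u : F) * x ∈ s ↔ x ∈ s) {k : ℕ}
    (hk : k ∈ (∏ x ∈ s, (X - C x)).support) : k ≡ #s [MOD Nat.card H] := by
  obtain ⟨g, hg⟩ := IsCyclic.exists_ofOrder_eq_natCard (α := H)
  have hpow := pow_eq_pow_card_of_mem_support_prod_X_sub_C (Units.ne_zero (g : Fˣ)) (hs g g.2) hk
  rw [← hg, ← Subgroup.orderOf_coe, ← pow_eq_pow_iff_modEq, ← Units.val_inj]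
  push_cast
  exact hpow

theorem exists_eq_single_of_mem_support_toMvPolynomial {σ : Type*} [CommSemiring R] (i : σ)
    (p : R[X]) :
    ∀ u ∈ (p.toMvPolynomial i).support, ∃ k ∈ p.support, u = Finsupp.single i k := by
  classical
  intro u hu
  rw [p.as_sum_support] at hu
  simp only [map_sum, ← C_mul_X_pow_eq_monomial, map_mul, map_pow, toMvPolynomial_C,
    toMvPolynomial_X, MvPolynomial.C_mul_X_pow_eq_monomial] at hu
  obtain ⟨k, hk, hu⟩ := mem_biUnion.1 (MvPolynomial.support_sum hu)
  exact ⟨k, hk, mem_singleton.1 (MvPolynomial.support_monomial_subset hu)⟩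

theorem vars_toMvPolynomial_subset {σ : Type*} [CommSemiring R] (i : σ) (p : R[X]) :
    (p.toMvPolynomial i).vars ⊆ {i} := by
  intro j hj
  obtain ⟨u, hu, hj⟩ := (MvPolynomial.mem_vars_iff_mem_support j).1 hj
  obtain ⟨k, -, rfl⟩ := exists_eq_single_of_mem_support_toMvPolynomial i p u hu
  exact Finsupp.support_single_subset hj

end Polynomial

namespace MvPolynomial

theorem apply_mem_support_of_mem_support_prod_toMvPolynomial {R σ : Type*} [CommSemiring R]
    [DecidableEq σ] {f : σ → R[X]} {s : Finset σ} {e : σ →₀ ℕ}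
    (he : e ∈ (∏ j ∈ s, (f j).toMvPolynomial j).support) {i : σ} (hi : i ∈ s) :
    e i ∈ (f i).support := by
  rw [← mul_prod_erase s _ hi] at he
  obtain ⟨u, hu, v, hv, rfl⟩ := mem_add.1 (support_mul _ _ he)
  obtain ⟨k, hk, rfl⟩ := exists_eq_single_of_mem_support_toMvPolynomial i (f i) u hu
  have hvi : v i = 0 := by
    by_contra hvi
    have hiv : i ∈ (∏ j ∈ s.erase i, (f j).toMvPolynomial j).vars :=
      (mem_vars_iff_mem_support i).2 ⟨v, hv, Finsupp.mem_support_iff.2 hvi⟩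
    obtain ⟨j, hj, hij⟩ := mem_biUnion.1 (vars_prod _ hiv)
    exact (ne_of_mem_erase hj) (mem_singleton.1 (vars_toMvPolynomial_subset j (f j) hij)).symm
  simpa [hvi] using hk

end MvPolynomial

theorem Nat.exists_lt_div_mul_le_add_le {m d a b t : ℕ} (hd0 : 0 < d) (hdm : d ≤ m) (hda : d ∣ a)
    (ha : a ≤ m - d) (hb : b ≤ d - t) : ∃ j < m / d, j * d ≤ a + b ∧ a + b ≤ j * d + (d - t) := by
  obtain ⟨j, rfl⟩ := hda
  rw [mul_comm] at ha ⊢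
  refine ⟨j, (Nat.le_div_iff_mul_le hd0).2 ?_, by omega, by omega⟩
  rw [Nat.succ_mul]
  omega

section Coset

variable {F : Type*} [Field F]

theorem exists_finset_eq_coset [Fintype F] (H : Subgroup Fˣ) (γ : Fˣ) :
    ∃ G : Finset F, #G = Nat.card H ∧ ∀ x, x ∈ G ↔ ∃ h ∈ H, x = ((γ * h : Fˣ) : F) := by
  classical
  refine ⟨(H : Set Fˣ).toFinset.image (fun h => ((γ * h : Fˣ) : F)), ?_, fun x => ?_⟩
  · rw [card_image_of_injective _ fun a b hab => mul_left_cancel (Units.val_injective hab),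
      Set.toFinset_card, ← Nat.card_eq_fintype_card, SetLike.coe_sort_coe]
  · simp only [mem_image, Set.mem_toFinset, SetLike.mem_coe]
    exact ⟨fun ⟨h, hh, hx⟩ => ⟨h, hh, hx.symm⟩, fun ⟨h, hh, hx⟩ => ⟨h, hh, hx.symm⟩⟩

theorem mul_mem_coset_iff {H : Subgroup Fˣ} {γ u : Fˣ} (hu : u ∈ H) (x : F) :
    (∃ h ∈ H, (u : F) * x = ((γ * h : Fˣ) : F)) ↔ ∃ h ∈ H, x = ((γ * h : Fˣ) : F) := by
  constructor
  · rintro ⟨h, hh, hx⟩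
    refine ⟨u⁻¹ * h, mul_mem (inv_mem hu) hh, ?_⟩
    rw [← Units.inv_mul_cancel_left u x, hx]
    push_cast
    ring
  · rintro ⟨h, hh, rfl⟩
    exact ⟨u * h, mul_mem hu hh, by push_cast; ring⟩

end Coset

theorem exists_window_of_mem_support_prod_compl_coset {F : Type*} [Field F] [Fintype F]
    [DecidableEq F] {H : Subgroup Fˣ} {γ : Fˣ} {T : Finset F}
    (hT : ∀ x ∈ T, ∃ h ∈ H, x = ((γ * h : Fˣ) : F)) {k : ℕ}
    (hk : k ∈ (∏ x ∈ univ.filter (· ≠ 0) \ T, (X - C x)).support) :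
    ∃ j < (Fintype.card F - 1) / Nat.card H,
      j * Nat.card H ≤ k ∧ k ≤ j * Nat.card H + (Nat.card H - #T) := by
  obtain ⟨G, hGcard, hG⟩ := exists_finset_eq_coset H γ
  set N : Finset F := univ.filter (· ≠ 0)
  set d := Nat.card H
  have hTG : T ⊆ G := fun x hx => (hG x).2 (hT x hx)
  have hGN : G ⊆ N := fun x hx => by
    obtain ⟨h, -, rfl⟩ := (hG x).1 hx
    simp [N]
  have hN : #N = Fintype.card F - 1 := by
    rw [show N = univ.erase 0 from filter_ne' _ _, card_erase_of_mem (mem_univ _), card_univ]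
  have hd : d ∣ Fintype.card F - 1 := by
    rw [← Nat.card_eq_fintype_card, ← Nat.card_units]
    exact Subgroup.card_subgroup_dvd_card H
  have hstable : ∀ u ∈ H, ∀ x, (u : F) * x ∈ N \ G ↔ x ∈ N \ G := fun u hu x => by
    rw [mem_sdiff, mem_sdiff, hG, hG, mul_mem_coset_iff hu]
    simp [N]
  rw [← sdiff_union_sdiff_cancel hGN hTG,
    prod_union (disjoint_sdiff_self_left.mono_right sdiff_subset)] at hk
  obtain ⟨a, ha, b, hb, rfl⟩ := mem_add.1 (support_mul_subset _ _ hk)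
  have hcardNG : #(N \ G) = Fintype.card F - 1 - d := by
    rw [card_sdiff_of_subset hGN, hN, hGcard]
  have hda : d ∣ a := by
    rw [← Nat.modEq_zero_iff_dvd]
    refine (modEq_card_of_mem_support_prod_X_sub_C hstable ha).trans ?_
    rw [hcardNG, Nat.modEq_zero_iff_dvd]
    exact Nat.dvd_sub hd dvd_rfl
  have haN := le_card_of_mem_support_prod_X_sub_C ha
  have hbG := le_card_of_mem_support_prod_X_sub_C hb
  rw [hcardNG] at haN
  rw [card_sdiff_of_subset hTG, hGcard] at hbG
  have hdq : d ≤ Fintype.card F - 1 := Nat.le_of_dvd (Nat.sub_pos_of_lt Fintype.one_lt_card) hd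
  exact Nat.exists_lt_div_mul_le_add_le Nat.card_pos hdq hda haN hbG

theorem support_subset_W_general
    {F : Type*} [Field F] [Fintype F] [DecidableEq F] {q n : ℕ}
    (hq : Fintype.card F = q)
    (T : Fin n → Finset F)
    (H : Fin n → Subgroup Fˣ) (d : Fin n → ℕ) (hd : ∀ i, Nat.card (H i) = d i)
    (γ : Fin n → Fˣ)
    (hsub : ∀ i, ∀ x ∈ T i, ∃ h ∈ H i, x = ((γ i * h : Fˣ) : F))
    (S : Fin n → Finset F) (hS : ∀ i, S i = Finset.univ.filter (· ≠ (0 : F)) \ T i)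
    (t : Fin n → ℕ) (ht : ∀ i, t i = (T i).card)
    (P : MvPolynomial (Fin n) F)
    (hP : P = ∏ i, ∏ x ∈ S i, (MvPolynomial.X i - MvPolynomial.C x)) :
    ∀ e ∈ P.support, ∀ i, ∃ j < (q - 1) / d i,
      j * d i ≤ e i ∧ e i ≤ j * d i + (d i - t i) := by
  intro e he i
  have hP' : P = ∏ i, (∏ x ∈ S i, (X - C x)).toMvPolynomial i := by
    simp only [hP, map_prod, map_sub, toMvPolynomial_X, toMvPolynomial_C]
  rw [hP'] at he
  have hei := MvPolynomial.apply_mem_support_of_mem_support_prod_toMvPolynomial he (mem_univ i)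
  rw [hS i] at hei
  rw [← hq, ← hd, ht]
  exact exists_window_of_mem_support_prod_compl_coset (hsub i) hei

/-- **Containment of the support in `W` (from the proof of Theorem 4).** For
`i = 1,…,n` let `T_i ⊆ F_q^*` be a nonempty set contained in a coset `γ_i H_i` of a
multiplicative subgroup `H_i ≤ F_q^*` of order `d_i`, let `S_i = F_q^* \ T_i` and
`t_i = |T_i| ≤ d_i`, and set `P = ∏_{i=1}^n ∏_{x ∈ S_i}(X_i - x)`. Then every monomial
`X_1^{v_1} ⋯ X_n^{v_n}` occurring in `P` with nonzero coefficient satisfies, for each `i`,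
`v_i ∈ {j d_i, j d_i + 1, …, j d_i + (d_i - t_i)}` for some `j ∈ {0,…,(q-1)/d_i - 1}`. -/
theorem support_subset_W
    {F : Type*} [Field F] [Fintype F] [DecidableEq F] {q n : ℕ}
    (hq : Fintype.card F = q) (hn : 0 < n)
    (T : Fin n → Finset F) (hT0 : ∀ i, (0 : F) ∉ T i) (hTne : ∀ i, (T i).Nonempty)
    (H : Fin n → Subgroup Fˣ) (d : Fin n → ℕ) (hd : ∀ i, Nat.card (H i) = d i)
    (γ : Fin n → Fˣ)
    (hsub : ∀ i, ∀ x ∈ T i, ∃ h ∈ H i, x = ((γ i * h : Fˣ) : F))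
    (S : Fin n → Finset F) (hS : ∀ i, S i = Finset.univ.filter (· ≠ (0 : F)) \ T i)
    (t : Fin n → ℕ) (ht : ∀ i, t i = (T i).card) (htd : ∀ i, t i ≤ d i)
    (P : MvPolynomial (Fin n) F)
    (hP : P = ∏ i, ∏ x ∈ S i, (MvPolynomial.X i - MvPolynomial.C x)) :
    ∀ e ∈ P.support, ∀ i, ∃ j < (q - 1) / d i,
      j * d i ≤ e i ∧ e i ≤ j * d i + (d i - t i) :=
  support_subset_W_general hq T H d hd γ hsub S hS t ht P hP
end
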